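/- arXiv:2603.27363 — 9 statements merged into one kernel-verified Lean document; each statement's English description precedes it below -/
import Mathlib

section
/- For all real numbers a > 0, b > 0 and θ with 0 < θ ≤ π/2, the partial derivative of T with respect to its second argument satisfies deriv (fun x ↦ T(a, x, θ)) b = −(2·a·sin θ) / (a² + b² + 2·a·b·cos θ + sin²θ); in particular, in logarithmic coordinates u₂ = ln b one has b · deriv (fun x ↦ T(a, x, θ)) b = −(2·a·b·sin θ) / (a² + b² + 2·a·b·cos θ + sin²θ). -/
open Real Filter

/-- Total geodesic curvature of the arc of the first circle bounding the
intersection bigon of two spherical disks with boundary geodesic curvatures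
`a`, `b` intersecting at interior angle `θ`. -/
noncomputable def T (a b θ : ℝ) : ℝ :=
  (2 * a / Real.sqrt (a ^ 2 + 1)) *
    Real.arctan (Real.sin θ * Real.sqrt (a ^ 2 + 1) / (b + a * Real.cos θ))

theorem stmt_0 (a b θ : ℝ) (ha : 0 < a) (hb : 0 < b)
    (hθ₁ : 0 < θ) (hθ₂ : θ ≤ Real.pi / 2) :
    deriv (fun x => T a x θ) b =
      -(2 * a * Real.sin θ) /
        (a ^ 2 + b ^ 2 + 2 * a * b * Real.cos θ + Real.sin θ ^ 2) ∧
    b * deriv (fun x => T a x θ) b =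
      -(2 * a * b * Real.sin θ) /
        (a ^ 2 + b ^ 2 + 2 * a * b * Real.cos θ + Real.sin θ ^ 2) := by
  have hS : (0:ℝ) < a ^ 2 + 1 := by positivity
  have hsq : Real.sqrt (a ^ 2 + 1) ^ 2 = a ^ 2 + 1 := Real.sq_sqrt hS.le
  have hsqpos : 0 < Real.sqrt (a ^ 2 + 1) := Real.sqrt_pos.mpr hS
  have hcos : 0 ≤ Real.cos θ :=
    Real.cos_nonneg_of_mem_Icc ⟨by linarith [Real.pi_pos], hθ₂⟩
  have hsin : 0 < Real.sin θ := Real.sin_pos_of_pos_of_lt_pi hθ₁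
    (lt_of_le_of_lt hθ₂ (by linarith [Real.pi_pos]))
  have hd : 0 < b + a * Real.cos θ := by positivity
  set K := Real.sin θ * Real.sqrt (a ^ 2 + 1) with hK
  have h1 : HasDerivAt (fun x : ℝ => K / (x + a * Real.cos θ))
      (-(K / (b + a * Real.cos θ) ^ 2)) b := by
    have h0 : HasDerivAt (fun x : ℝ => x + a * Real.cos θ) 1 b :=
      (hasDerivAt_id b).add_const _
    have := (hasDerivAt_const b K).div h0 hd.ne'
    simp only [zero_mul, zero_sub, mul_one, neg_div] at this
    exact this
  have h2 : HasDerivAt (fun x : ℝ => T a x θ)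
      ((2 * a / Real.sqrt (a ^ 2 + 1)) *
        ((1 / (1 + (K / (b + a * Real.cos θ)) ^ 2)) *
          (-(K / (b + a * Real.cos θ) ^ 2)))) b := by
    have harc := (Real.hasDerivAt_arctan (K / (b + a * Real.cos θ))).comp b h1
    exact harc.const_mul _
  have hden : 0 < a ^ 2 + b ^ 2 + 2 * a * b * Real.cos θ + Real.sin θ ^ 2 := by
    positivity
  have key : deriv (fun x => T a x θ) b =
      -(2 * a * Real.sin θ) /
        (a ^ 2 + b ^ 2 + 2 * a * b * Real.cos θ + Real.sin θ ^ 2) := by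
    rw [h2.deriv, hK]
    have hcos2 : Real.cos θ ^ 2 = 1 - Real.sin θ ^ 2 := by
      have := Real.sin_sq_add_cos_sq θ; linarith
    field_simp
    rw [hsq]
    linear_combination
      (a ^ 2) * hcos2
  exact ⟨key, by rw [key]; ring⟩
end

section
/- For all real numbers b > 0 and θ with 0 < θ ≤ π/2, the function a ↦ T(a, b, θ) is strictly increasing on (0, ∞); equivalently, for 0 < a₁ < a₂ one has T(a₁, b, θ) < T(a₂, b, θ). (This is property (a) of the monotonicity lemma: ∂T_{i,e}/∂u_i > 0.) -/
open Real Filter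

lemma arctan_gt_div (x : ℝ) (hx : 0 < x) : x / (1 + x ^ 2) < Real.arctan x := by
  have h1 : 0 < Real.arctan x := by simpa using Real.arctan_strictMono hx
  have h2 := Real.sin_lt (show 0 < 2 * Real.arctan x by linarith)
  rw [Real.sin_two_mul, Real.sin_arctan, Real.cos_arctan] at h2
  have h4 : Real.sqrt (1 + x ^ 2) * Real.sqrt (1 + x ^ 2) = 1 + x ^ 2 :=
    Real.mul_self_sqrt (by positivity)
  have h5 : (0:ℝ) < Real.sqrt (1 + x ^ 2) := by positivity
  have h6 : 2 * (x / Real.sqrt (1 + x ^ 2)) * (1 / Real.sqrt (1 + x ^ 2))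
      = 2 * (x / (1 + x ^ 2)) := by field_simp; rw [Real.sq_sqrt (by positivity)]
  rw [h6] at h2
  linarith

lemma rat1 (u s p w : ℝ) (hs : s ≠ 0) (hp : p ≠ 0) :
    w / (s * p ^ 2) / (1 + (u * s / p) ^ 2) = w / (s * (p ^ 2 + u ^ 2 * s ^ 2)) := by
  have hd : p ^ 2 + u ^ 2 * s ^ 2 ≠ 0 := by
    intro h; apply hp; nlinarith [sq_nonneg (u*s), sq_nonneg p]
  field_simp

lemma rat2 (u s p : ℝ) (hs : s ≠ 0) (hp : p ≠ 0) :
    (u * s / p) / (1 + (u * s / p) ^ 2) = u * s * p / (p ^ 2 + u ^ 2 * s ^ 2) := by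
  have hd : p ^ 2 + u ^ 2 * s ^ 2 ≠ 0 := by
    intro h; apply hp; nlinarith [sq_nonneg (u*s), sq_nonneg p]
  field_simp

lemma rat3 (a b u c s d : ℝ) (hs : s ≠ 0) (hd : d ≠ 0) (hs2 : s ^ 2 = a ^ 2 + 1) :
    2 / s ^ 3 * (u * s * (b + a * c) / d) + 2 * a / s * (u * (a * b - c) / (s * d))
      = 2 * u * b / d := by
  field_simp
  linear_combination (-u * b) * hs2

lemma hasDeriv_key (b u c a : ℝ) (ha : 0 < a) (hb : 0 < b) (hu : 0 < u) (hc : 0 ≤ c) :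
    HasDerivAt (fun a => (2 * a / Real.sqrt (a ^ 2 + 1)) *
        Real.arctan (u * Real.sqrt (a ^ 2 + 1) / (b + a * c)))
      (2 / Real.sqrt (a ^ 2 + 1) ^ 3 *
          Real.arctan (u * Real.sqrt (a ^ 2 + 1) / (b + a * c)) +
        2 * a / Real.sqrt (a ^ 2 + 1) *
          (u * (a * b - c) / (Real.sqrt (a ^ 2 + 1) *
            ((b + a * c) ^ 2 + u ^ 2 * Real.sqrt (a ^ 2 + 1) ^ 2)))) a := by
  set s := Real.sqrt (a ^ 2 + 1) with hsdef
  have hs : 0 < s := Real.sqrt_pos.2 (by positivity)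
  have hs2 : s ^ 2 = a ^ 2 + 1 := Real.sq_sqrt (by positivity)
  have hP : 0 < b + a * c := by positivity
  have h0 : HasDerivAt (fun a : ℝ => a ^ 2 + 1) (2 * a) a := by
    simpa using (hasDerivAt_pow 2 a).add_const 1
  have h1 : HasDerivAt (fun a : ℝ => Real.sqrt (a ^ 2 + 1)) (a / s) a := by
    have h := h0.sqrt (by positivity)
    convert h using 1
    rw [← hsdef]
    field_simp
  have h2 : HasDerivAt (fun a : ℝ => u * Real.sqrt (a ^ 2 + 1)) (u * (a / s)) a :=
    h1.const_mul u
  have h3 : HasDerivAt (fun a : ℝ => b + a * c) c a := by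
    simpa using (hasDerivAt_mul_const c).const_add b
  have h4 : HasDerivAt (fun a : ℝ => u * Real.sqrt (a ^ 2 + 1) / (b + a * c))
      ((u * (a / s) * (b + a * c) - u * s * c) / (b + a * c) ^ 2) a := h2.div h3 hP.ne'
  have hnum : u * (a / s) * (b + a * c) - u * s * c = u * (a * b - c) / s := by
    rw [eq_div_iff hs.ne']
    field_simp
    linear_combination (-c) * hs2
  rw [hnum, div_div] at h4
  have h5 := h4.arctan
  rw [one_div, inv_mul_eq_div, ← hsdef] at h5
  rw [rat1 u s (b + a * c) (u * (a * b - c)) hs.ne' hP.ne'] at h5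
  have h6 : HasDerivAt (fun a : ℝ => 2 * a) 2 a := by
    simpa using (hasDerivAt_id a).const_mul 2
  have h7 : HasDerivAt (fun a : ℝ => 2 * a / Real.sqrt (a ^ 2 + 1))
      ((2 * s - 2 * a * (a / s)) / s ^ 2) a := h6.div h1 hs.ne'
  have e4 : (2 * s - 2 * a * (a / s)) / s ^ 2 = 2 / s ^ 3 := by
    rw [div_eq_div_iff (by positivity) (by positivity)]
    field_simp
    linear_combination hs2
  rw [e4] at h7
  exact h7.mul h5

lemma deriv_pos_key (b u c a : ℝ) (ha : 0 < a) (hb : 0 < b) (hu : 0 < u) (hc : 0 ≤ c) :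
    0 < 2 / Real.sqrt (a ^ 2 + 1) ^ 3 *
          Real.arctan (u * Real.sqrt (a ^ 2 + 1) / (b + a * c)) +
        2 * a / Real.sqrt (a ^ 2 + 1) *
          (u * (a * b - c) / (Real.sqrt (a ^ 2 + 1) *
            ((b + a * c) ^ 2 + u ^ 2 * Real.sqrt (a ^ 2 + 1) ^ 2))) := by
  set s := Real.sqrt (a ^ 2 + 1) with hsdef
  have hs : 0 < s := Real.sqrt_pos.2 (by positivity)
  have hs2 : s ^ 2 = a ^ 2 + 1 := Real.sq_sqrt (by positivity)
  have hP : 0 < b + a * c := by positivity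
  have hD : (0:ℝ) < (b + a * c) ^ 2 + u ^ 2 * s ^ 2 := by positivity
  have hx : (0:ℝ) < u * s / (b + a * c) := by positivity
  have harc := arctan_gt_div _ hx
  rw [rat2 u s (b + a * c) hs.ne' hP.ne'] at harc
  have hsum := rat3 a b u c s ((b + a * c) ^ 2 + u ^ 2 * s ^ 2) hs.ne' hD.ne' hs2
  have hpos : 0 < 2 * u * b / ((b + a * c) ^ 2 + u ^ 2 * s ^ 2) := by positivity
  have hc0 : (0:ℝ) < 2 / s ^ 3 := by positivity
  nlinarith [mul_lt_mul_of_pos_left harc hc0]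

theorem stmt_1 (b θ : ℝ) (hb : 0 < b) (hθ₁ : 0 < θ) (hθ₂ : θ ≤ Real.pi / 2) :
    StrictMonoOn (fun a => T a b θ) (Set.Ioi (0 : ℝ)) := by
  have hpi := Real.pi_pos
  have hu : 0 < Real.sin θ :=
    Real.sin_pos_of_pos_of_lt_pi hθ₁ (lt_of_le_of_lt hθ₂ (by linarith))
  have hc : 0 ≤ Real.cos θ := Real.cos_nonneg_of_mem_Icc ⟨by linarith, hθ₂⟩
  have hfun : (fun a => T a b θ) = fun a => (2 * a / Real.sqrt (a ^ 2 + 1)) *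
      Real.arctan (Real.sin θ * Real.sqrt (a ^ 2 + 1) / (b + a * Real.cos θ)) := rfl
  rw [hfun]
  apply strictMonoOn_of_deriv_pos (convex_Ioi 0)
  · exact fun a ha =>
      (hasDeriv_key b (Real.sin θ) (Real.cos θ) a ha hb hu hc).continuousAt.continuousWithinAt
  · intro a ha
    rw [interior_Ioi] at ha
    rw [(hasDeriv_key b (Real.sin θ) (Real.cos θ) a ha hb hu hc).deriv]
    exact deriv_pos_key b (Real.sin θ) (Real.cos θ) a ha hb hu hc
end

section
/- For all real numbers a > 0, b > 0 and θ with 0 < θ ≤ π/2, the mixed logarithmic partial derivatives are symmetric: b · deriv (fun x ↦ T(a, x, θ)) b = a · deriv (fun x ↦ T(b, x, θ)) a, both being equal to −(2·a·b·sin θ)/(a² + b² + 2·a·b·cos θ + sin²θ). (This is the symmetry ∂T_{i,e}/∂u_j = ∂T_{j,e}/∂u_i in the monotonicity lemma.) -/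
open Real Filter

lemma deriv_T (a b θ : ℝ) (ha : 0 < a) (hb : 0 < b)
    (hθ₁ : 0 < θ) (hθ₂ : θ ≤ Real.pi / 2) :
    deriv (fun x => T a x θ) b =
      -(2 * a * Real.sin θ) /
        (a ^ 2 + b ^ 2 + 2 * a * b * Real.cos θ + Real.sin θ ^ 2) := by
  have hcos : 0 ≤ Real.cos θ := Real.cos_nonneg_of_mem_Icc ⟨by linarith [Real.pi_pos], hθ₂⟩
  have hden : 0 < b + a * Real.cos θ := by positivity
  have hs2 : Real.sqrt (a ^ 2 + 1) ^ 2 = a ^ 2 + 1 :=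
    Real.sq_sqrt (by positivity)
  have hs : 0 < Real.sqrt (a ^ 2 + 1) := Real.sqrt_pos.mpr (by positivity)
  set s := Real.sqrt (a ^ 2 + 1) with hsdef
  have h1 : HasDerivAt (fun x : ℝ => Real.sin θ * s / (x + a * Real.cos θ))
      (-(Real.sin θ * s) / (b + a * Real.cos θ) ^ 2) b := by
    have hx : HasDerivAt (fun x : ℝ => x + a * Real.cos θ) 1 b :=
      (hasDerivAt_id b).add_const _
    have hinv : HasDerivAt (fun x : ℝ => (x + a * Real.cos θ)⁻¹)
        (-1 / (b + a * Real.cos θ) ^ 2) b := hx.inv hden.ne'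
    have h := hinv.const_mul (Real.sin θ * s)
    have heq : (fun x : ℝ => Real.sin θ * s * (x + a * Real.cos θ)⁻¹) =
        (fun x : ℝ => Real.sin θ * s / (x + a * Real.cos θ)) := by
      funext x; rw [div_eq_mul_inv]
    rw [heq] at h
    exact h.congr_deriv (by ring)
  have h2 : HasDerivAt (fun x : ℝ =>
      Real.arctan (Real.sin θ * s / (x + a * Real.cos θ)))
      ((1 / (1 + (Real.sin θ * s / (b + a * Real.cos θ)) ^ 2)) *
        (-(Real.sin θ * s) / (b + a * Real.cos θ) ^ 2)) b :=
    (Real.hasDerivAt_arctan _).comp b h1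
  have h3 : HasDerivAt (fun x => T a x θ)
      ((2 * a / s) * ((1 / (1 + (Real.sin θ * s / (b + a * Real.cos θ)) ^ 2)) *
        (-(Real.sin θ * s) / (b + a * Real.cos θ) ^ 2))) b := h2.const_mul _
  rw [h3.deriv]
  have hDpos : 0 < a ^ 2 + b ^ 2 + 2 * a * b * Real.cos θ + Real.sin θ ^ 2 := by
    nlinarith [Real.sin_sq_add_cos_sq θ]
  have key : (b + a * Real.cos θ) ^ 2 + (Real.sin θ * s) ^ 2 =
      a ^ 2 + b ^ 2 + 2 * a * b * Real.cos θ + Real.sin θ ^ 2 := by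
    have := Real.sin_sq_add_cos_sq θ
    nlinarith [hs2]
  field_simp
  rw [← key]
  ring

theorem stmt_3 (a b θ : ℝ) (ha : 0 < a) (hb : 0 < b)
    (hθ₁ : 0 < θ) (hθ₂ : θ ≤ Real.pi / 2) :
    b * deriv (fun x => T a x θ) b = a * deriv (fun x => T b x θ) a ∧
    b * deriv (fun x => T a x θ) b =
      -(2 * a * b * Real.sin θ) /
        (a ^ 2 + b ^ 2 + 2 * a * b * Real.cos θ + Real.sin θ ^ 2) := by
  rw [deriv_T a b θ ha hb hθ₁ hθ₂, deriv_T b a θ hb ha hθ₁ hθ₂]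
  constructor
  · ring_nf
  · field_simp
end

section
/- For all real numbers a > 0, b > 0 and θ with 0 < θ ≤ π/2, one has 0 < T(a, b, θ) + T(b, a, θ) < 2θ; in particular 0 < T(a, b, θ) < 2θ. (Geometrically, this is the Gauss–Bonnet inequality 0 < Area(Ω_e) and the positivity of the total geodesic curvatures of the two arcs bounding the bigon Ω_e.) -/
open Real Filter

lemma hasDerivAt_T (a b : ℝ) (ha : 0 < a) (hb : 0 < b) (θ : ℝ) (hc : 0 ≤ Real.cos θ) :
    HasDerivAt (T a b)
      (2 * a * (a + b * Real.cos θ) /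
        (a ^ 2 + b ^ 2 + 2 * a * b * Real.cos θ + Real.sin θ ^ 2)) θ := by
  set k := Real.sqrt (a ^ 2 + 1) with hkdef
  have hk2 : k ^ 2 = a ^ 2 + 1 := Real.sq_sqrt (by positivity)
  have hk : 0 < k := Real.sqrt_pos.mpr (by positivity)
  have hden : 0 < b + a * Real.cos θ := by nlinarith
  have hu : HasDerivAt (fun t => Real.sin t * k / (b + a * Real.cos t))
      ((Real.cos θ * k * (b + a * Real.cos θ) - Real.sin θ * k * (a * -Real.sin θ)) /
        (b + a * Real.cos θ) ^ 2) θ := by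
    exact HasDerivAt.div ((Real.hasDerivAt_sin θ).mul_const k)
      (((Real.hasDerivAt_cos θ).const_mul a).const_add b) hden.ne'
  have h := (hu.arctan).const_mul (2 * a / k)
  refine h.congr_deriv ?_
  have hD : 0 < a ^ 2 + b ^ 2 + 2 * a * b * Real.cos θ + Real.sin θ ^ 2 := by
    nlinarith [mul_nonneg (mul_nonneg ha.le hb.le) hc, sq_nonneg (Real.sin θ), mul_pos ha hb]
  have hnum : Real.cos θ * k * (b + a * Real.cos θ) - Real.sin θ * k * (a * -Real.sin θ)
      = k * (a + b * Real.cos θ) := by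
    have := Real.sin_sq_add_cos_sq θ
    linear_combination (a * k) * this
  have h1 : 1 + (Real.sin θ * k / (b + a * Real.cos θ)) ^ 2
      = (a ^ 2 + b ^ 2 + 2 * a * b * Real.cos θ + Real.sin θ ^ 2) / (b + a * Real.cos θ) ^ 2 := by
    have := Real.sin_sq_add_cos_sq θ
    field_simp
    linear_combination (Real.sin θ ^ 2) * hk2 + (a ^ 2) * this
  rw [hnum, h1]
  rw [div_div_eq_mul_div, one_mul]
  field_simp

lemma T_pos (a b θ : ℝ) (ha : 0 < a) (hb : 0 < b) (hθ₁ : 0 < θ) (hθ₂ : θ ≤ Real.pi / 2) :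
    0 < T a b θ := by
  have hk : 0 < Real.sqrt (a ^ 2 + 1) := Real.sqrt_pos.mpr (by positivity)
  have hs : 0 < Real.sin θ := Real.sin_pos_of_pos_of_lt_pi hθ₁ (by linarith [Real.pi_pos])
  have hc : 0 ≤ Real.cos θ := Real.cos_nonneg_of_mem_Icc ⟨by linarith [Real.pi_pos], hθ₂⟩
  have hden : 0 < b + a * Real.cos θ := by nlinarith
  have harg : 0 < Real.sin θ * Real.sqrt (a ^ 2 + 1) / (b + a * Real.cos θ) := by positivity
  have harct : 0 < Real.arctan (Real.sin θ * Real.sqrt (a ^ 2 + 1) / (b + a * Real.cos θ)) := by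
    have := Real.arctan_strictMono harg
    rwa [Real.arctan_zero] at this
  unfold T
  positivity

lemma T_sum_lt (a b θ : ℝ) (ha : 0 < a) (hb : 0 < b) (hθ₁ : 0 < θ) (hθ₂ : θ ≤ Real.pi / 2) :
    T a b θ + T b a θ < 2 * θ := by
  set g : ℝ → ℝ := fun t => 2 * t - T a b t - T b a t with hg
  have key : StrictMonoOn g (Set.Icc 0 (Real.pi / 2)) := by
    apply strictMonoOn_of_deriv_pos (convex_Icc _ _)
    · intro x hx
      have hc : 0 ≤ Real.cos x := Real.cos_nonneg_of_mem_Icc ⟨by linarith [hx.1, Real.pi_pos], hx.2⟩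
      exact (((hasDerivAt_const x 2).mul (hasDerivAt_id x)).sub
        (hasDerivAt_T a b ha hb x hc) |>.sub (hasDerivAt_T b a hb ha x hc)).continuousAt.continuousWithinAt
    · intro x hx
      rw [interior_Icc] at hx
      have hc : 0 ≤ Real.cos x := Real.cos_nonneg_of_mem_Icc ⟨by linarith [hx.1, Real.pi_pos], le_of_lt hx.2⟩
      have hs : 0 < Real.sin x := Real.sin_pos_of_pos_of_lt_pi hx.1 (by linarith [Real.pi_pos, hx.2])
      have hD : 0 < a ^ 2 + b ^ 2 + 2 * a * b * Real.cos x + Real.sin x ^ 2 := by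
        nlinarith [mul_nonneg (mul_nonneg ha.le hb.le) hc, sq_nonneg (Real.sin x), mul_pos ha hb]
      have hder : HasDerivAt g
          (2 * 1 - 2 * a * (a + b * Real.cos x) /
              (a ^ 2 + b ^ 2 + 2 * a * b * Real.cos x + Real.sin x ^ 2)
            - 2 * b * (b + a * Real.cos x) /
              (b ^ 2 + a ^ 2 + 2 * b * a * Real.cos x + Real.sin x ^ 2)) x := by
        exact (((hasDerivAt_id x).const_mul 2).sub
          (hasDerivAt_T a b ha hb x hc)).sub (hasDerivAt_T b a hb ha x hc)
      rw [hder.deriv]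
      have hD2 : (b ^ 2 + a ^ 2 + 2 * b * a * Real.cos x + Real.sin x ^ 2)
          = (a ^ 2 + b ^ 2 + 2 * a * b * Real.cos x + Real.sin x ^ 2) := by ring
      rw [hD2]
      have : 2 * a * (a + b * Real.cos x) / (a ^ 2 + b ^ 2 + 2 * a * b * Real.cos x + Real.sin x ^ 2)
          + 2 * b * (b + a * Real.cos x) / (a ^ 2 + b ^ 2 + 2 * a * b * Real.cos x + Real.sin x ^ 2)
          < 2 := by
        rw [← add_div, div_lt_iff₀ hD]
        nlinarith [hs, sq_nonneg (Real.sin x)]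
      linarith
  have h0 : g 0 = 0 := by simp [hg, T]
  have hmem0 : (0 : ℝ) ∈ Set.Icc (0 : ℝ) (Real.pi / 2) := ⟨le_refl _, by positivity⟩
  have hmemθ : θ ∈ Set.Icc (0 : ℝ) (Real.pi / 2) := ⟨hθ₁.le, hθ₂⟩
  have := key hmem0 hmemθ hθ₁
  rw [h0] at this
  simp only [hg] at this
  linarith

theorem stmt_6 (a b θ : ℝ) (ha : 0 < a) (hb : 0 < b)
    (hθ₁ : 0 < θ) (hθ₂ : θ ≤ Real.pi / 2) :
    (0 < T a b θ + T b a θ ∧ T a b θ + T b a θ < 2 * θ) ∧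
    (0 < T a b θ ∧ T a b θ < 2 * θ) := by
  have h1 := T_pos a b θ ha hb hθ₁ hθ₂
  have h2 := T_pos b a θ hb ha hθ₁ hθ₂
  have h3 := T_sum_lt a b θ ha hb hθ₁ hθ₂
  exact ⟨⟨by linarith, h3⟩, h1, by linarith⟩
end

section
/- Fix θ with 0 < θ ≤ π/2. Then T(a, b, θ) + T(b, a, θ) → 2θ as (a, b) → (∞, ∞), i.e. along the filter atTop ×ˢ atTop on pairs of positive reals. (This is the second case of Lemma 2.6: as both geodesic curvatures tend to infinity, the area of the intersection bigon tends to 0, so the sum of the two total geodesic curvatures tends to 2θ.) -/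
open Real Filter

lemma arctan_lip (u v : ℝ) : |Real.arctan u - Real.arctan v| ≤ |u - v| := by
  have h := Convex.norm_image_sub_le_of_norm_deriv_le (s := (Set.univ : Set ℝ))
    (f := Real.arctan) (C := 1)
    (fun x _ => Real.differentiableAt_arctan x)
    (fun x _ => by
      rw [Real.deriv_arctan]
      rw [Real.norm_eq_abs, abs_of_pos (by positivity)]
      rw [div_le_one (by positivity)]
      nlinarith [sq_nonneg x])
    convex_univ (Set.mem_univ v) (Set.mem_univ u)
  simpa [Real.norm_eq_abs] using h

lemma key_identity (a b θ : ℝ) (ha : 0 < a) (hb : 0 < b)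
    (hθ₁ : 0 < θ) (hθ₂ : θ ≤ Real.pi / 2) :
    Real.arctan (Real.sin θ * a / (b + a * Real.cos θ)) +
      Real.arctan (Real.sin θ * b / (a + b * Real.cos θ)) = θ := by
  rcases eq_or_lt_of_le hθ₂ with h | h
  · subst h
    simp only [Real.sin_pi_div_two, Real.cos_pi_div_two, mul_zero, add_zero, one_mul]
    have hab : a / b = (b / a)⁻¹ := by field_simp
    rw [hab, Real.arctan_inv_of_pos (by positivity)]
    ring
  · have hc : 0 < Real.cos θ := Real.cos_pos_of_mem_Ioo
      ⟨by linarith [Real.pi_pos], h⟩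
    have hs : 0 < Real.sin θ := Real.sin_pos_of_pos_of_lt_pi hθ₁
      (by linarith [Real.pi_pos])
    have hd1 : 0 < b + a * Real.cos θ := by positivity
    have hd2 : 0 < a + b * Real.cos θ := by positivity
    set x := Real.sin θ * a / (b + a * Real.cos θ) with hx
    set y := Real.sin θ * b / (a + b * Real.cos θ) with hy
    have hsc : Real.sin θ ^ 2 + Real.cos θ ^ 2 = 1 := Real.sin_sq_add_cos_sq θ
    have hxy : x * y < 1 := by
      rw [hx, hy, div_mul_div_comm, div_lt_one (by positivity)]
      nlinarith [sq_nonneg (a - b), mul_pos ha hb]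
    rw [Real.arctan_add hxy]
    have h1 : (b + a * Real.cos θ) ≠ 0 := ne_of_gt hd1
    have h2 : (a + b * Real.cos θ) ≠ 0 := ne_of_gt hd2
    have h3 : Real.cos θ ≠ 0 := ne_of_gt hc
    have hM : 0 < a ^ 2 + b ^ 2 + 2 * a * b * Real.cos θ := by nlinarith
    have e1 : x + y = Real.sin θ * (a ^ 2 + b ^ 2 + 2 * a * b * Real.cos θ) /
        ((b + a * Real.cos θ) * (a + b * Real.cos θ)) := by
      rw [hx, hy]; field_simp
      ring
    have e2 : 1 - x * y = Real.cos θ * (a ^ 2 + b ^ 2 + 2 * a * b * Real.cos θ) /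
        ((b + a * Real.cos θ) * (a + b * Real.cos θ)) := by
      rw [hx, hy]; field_simp
      linear_combination (-(a*b)) * hsc
    have : (x + y) / (1 - x * y) = Real.tan θ := by
      rw [Real.tan_eq_sin_div_cos, e1, e2]
      rw [div_div_div_comm, div_self (by positivity : ((b + a * Real.cos θ) * (a + b * Real.cos θ)) ≠ 0), div_one]
      rw [mul_div_mul_right _ _ (ne_of_gt hM)]
    rw [this, Real.arctan_tan (by linarith [Real.pi_pos]) h]

theorem stmt_9 (θ : ℝ) (hθ₁ : 0 < θ) (hθ₂ : θ ≤ Real.pi / 2) :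
    Filter.Tendsto (fun p : ℝ × ℝ => T p.1 p.2 θ + T p.2 p.1 θ)
      (Filter.atTop ×ˢ Filter.atTop) (nhds (2 * θ)) := by
  have hpi := Real.pi_pos
  have hs : 0 < Real.sin θ := Real.sin_pos_of_pos_of_lt_pi hθ₁ (by linarith)
  have hs1 : Real.sin θ ≤ 1 := Real.sin_le_one θ
  have hc : 0 ≤ Real.cos θ := Real.cos_nonneg_of_mem_Icc ⟨by linarith, hθ₂⟩
  -- bracket bound
  have bracket : ∀ a b : ℝ, 1 ≤ a → 1 ≤ b →
      |T a b θ - 2 * Real.arctan (Real.sin θ * a / (b + a * Real.cos θ))|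
        ≤ (Real.pi + 2) / a := by
    intro a b ha hb
    have ha0 : 0 < a := by linarith
    have hb0 : 0 < b := by linarith
    set s := Real.sqrt (a ^ 2 + 1) with hsdef
    have hs0 : 0 < s := Real.sqrt_pos.mpr (by positivity)
    have has : a ≤ s := by
      rw [hsdef]
      nlinarith [Real.sq_sqrt (show (0:ℝ) ≤ a^2+1 by positivity),
        Real.sqrt_nonneg (a^2+1)]
    have hs1' : 1 ≤ s := by linarith
    have hsa : s - a ≤ 1 / a := by
      have : s ≤ a + 1 / a := by
        rw [hsdef]
        rw [show a + 1/a = Real.sqrt ((a + 1/a)^2) from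
          (Real.sqrt_sq (by positivity)).symm]
        apply Real.sqrt_le_sqrt
        have : (a + 1/a)^2 = a^2 + 2 + (1/a)^2 := by field_simp; ring
        nlinarith [sq_nonneg (1/a)]
      linarith
    have hd : 0 < b + a * Real.cos θ := by positivity
    have hble : b ≤ b + a * Real.cos θ := by nlinarith
    set u := Real.sin θ / (b + a * Real.cos θ) with hu
    have hu0 : 0 < u := by positivity
    have hub : u ≤ 1 / b := by
      rw [hu, div_le_div_iff₀ hd hb0]
      nlinarith
    have key : T a b θ - 2 * Real.arctan (Real.sin θ * a / (b + a * Real.cos θ))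
        = 2 * ((a / s - 1) * Real.arctan (Real.sin θ * s / (b + a * Real.cos θ)))
          + 2 * (Real.arctan (Real.sin θ * s / (b + a * Real.cos θ))
              - Real.arctan (Real.sin θ * a / (b + a * Real.cos θ))) := by
      unfold T
      rw [← hsdef]
      field_simp
      ring
    rw [key]
    have b1 : |2 * ((a / s - 1) * Real.arctan (Real.sin θ * s / (b + a * Real.cos θ)))|
        ≤ Real.pi / a := by
      rw [abs_mul, abs_mul]
      have e1 : |a / s - 1| ≤ 1 / a := by
        rw [abs_of_nonpos (by rw [sub_nonpos]; rw [div_le_one hs0]; exact has), neg_sub]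
        have h' : 1 - a / s = (s - a) / s := by field_simp
        rw [h']
        have : (s - a) / s ≤ s - a := by
          rw [div_le_iff₀ hs0]
          nlinarith
        linarith
      have e2 : |Real.arctan (Real.sin θ * s / (b + a * Real.cos θ))| ≤ Real.pi / 2 := by
        rw [abs_le]
        exact ⟨le_of_lt (Real.neg_pi_div_two_lt_arctan _),
          le_of_lt (Real.arctan_lt_pi_div_two _)⟩
      calc |(2:ℝ)| * (|a / s - 1| * |Real.arctan _|)
          ≤ 2 * (1 / a * (Real.pi / 2)) := by
            rw [abs_two]
            gcongr
          _ = Real.pi / a := by ring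
    have b2 : |2 * (Real.arctan (Real.sin θ * s / (b + a * Real.cos θ))
        - Real.arctan (Real.sin θ * a / (b + a * Real.cos θ)))| ≤ 2 / a := by
      rw [abs_mul, abs_two]
      have := arctan_lip (Real.sin θ * s / (b + a * Real.cos θ))
        (Real.sin θ * a / (b + a * Real.cos θ))
      have e : |Real.sin θ * s / (b + a * Real.cos θ)
          - Real.sin θ * a / (b + a * Real.cos θ)| = (s - a) * u := by
        rw [hu]
        rw [abs_of_nonneg]
        · field_simp
        · have h' : Real.sin θ * s / (b + a * Real.cos θ)
              - Real.sin θ * a / (b + a * Real.cos θ)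
              = Real.sin θ * (s - a) / (b + a * Real.cos θ) := by ring
          rw [h']
          exact div_nonneg (mul_nonneg hs.le (by linarith)) hd.le
      rw [e] at this
      have hle : (s - a) * u ≤ 1 / a * (1 / b) :=
        mul_le_mul hsa hub (le_of_lt hu0) (by positivity)
      have hb' : 1 / a * (1 / b) ≤ 1 / a * 1 :=
        mul_le_mul_of_nonneg_left (by rw [div_le_one hb0]; exact hb) (by positivity)
      calc 2 * |Real.arctan (Real.sin θ * s / (b + a * Real.cos θ))
            - Real.arctan (Real.sin θ * a / (b + a * Real.cos θ))| ≤ 2 * (1 / a) := by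
            have := abs_nonneg (Real.arctan (Real.sin θ * s / (b + a * Real.cos θ))
              - Real.arctan (Real.sin θ * a / (b + a * Real.cos θ)))
            linarith
          _ = 2 / a := by ring
    calc |_ + _| ≤ _ := abs_add_le _ _
      _ ≤ Real.pi / a + 2 / a := add_le_add b1 b2
      _ = (Real.pi + 2) / a := by ring
  -- main limit argument
  have hdiff : Filter.Tendsto
      (fun p : ℝ × ℝ => T p.1 p.2 θ + T p.2 p.1 θ - 2 * θ)
      (Filter.atTop ×ˢ Filter.atTop) (nhds 0) := by
    apply squeeze_zero_norm'
      (a := fun p : ℝ × ℝ => (Real.pi + 2) / p.1 + (Real.pi + 2) / p.2)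
    · have h1 : ∀ᶠ p : ℝ × ℝ in Filter.atTop ×ˢ Filter.atTop, 1 ≤ p.1 ∧ 1 ≤ p.2 :=
        Filter.Eventually.prod_mk (Filter.eventually_ge_atTop 1)
          (Filter.eventually_ge_atTop 1)
      filter_upwards [h1] with p hp
      obtain ⟨ha, hb⟩ := hp
      have ha0 : 0 < p.1 := by linarith
      have hb0 : 0 < p.2 := by linarith
      have hid := key_identity p.1 p.2 θ ha0 hb0 hθ₁ hθ₂
      have e : T p.1 p.2 θ + T p.2 p.1 θ - 2 * θ
          = (T p.1 p.2 θ - 2 * Real.arctan (Real.sin θ * p.1 / (p.2 + p.1 * Real.cos θ)))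
            + (T p.2 p.1 θ - 2 * Real.arctan (Real.sin θ * p.2 / (p.1 + p.2 * Real.cos θ))) := by
        linarith [hid]
      rw [Real.norm_eq_abs, e]
      calc |_ + _| ≤ _ := abs_add_le _ _
        _ ≤ (Real.pi + 2) / p.1 + (Real.pi + 2) / p.2 :=
            add_le_add (bracket p.1 p.2 ha hb) (bracket p.2 p.1 hb ha)
    · have t1 : Filter.Tendsto (fun p : ℝ × ℝ => (Real.pi + 2) / p.1)
          (Filter.atTop ×ˢ Filter.atTop) (nhds 0) := by
        have := (tendsto_inv_atTop_zero).comp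
          (Filter.tendsto_fst (f := Filter.atTop (α := ℝ)) (g := Filter.atTop (α := ℝ)))
        have := this.const_mul (Real.pi + 2)
        simpa [div_eq_mul_inv, Function.comp] using this
      have t2 : Filter.Tendsto (fun p : ℝ × ℝ => (Real.pi + 2) / p.2)
          (Filter.atTop ×ˢ Filter.atTop) (nhds 0) := by
        have := (tendsto_inv_atTop_zero).comp
          (Filter.tendsto_snd (f := Filter.atTop (α := ℝ)) (g := Filter.atTop (α := ℝ)))
        have := this.const_mul (Real.pi + 2)
        simpa [div_eq_mul_inv, Function.comp] using this
      simpa using t1.add t2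
  have := hdiff.add_const (2 * θ)
  simpa using this
end

section
/- Let n ≥ 1, let θ₁, …, θₙ be real numbers with 0 < θᵢ ≤ π/2, and define T_f(x, k₁, …, kₙ) := Σᵢ₌₁ⁿ T(x, kᵢ, θᵢ) for x > 0 and k₁, …, kₙ > 0, i.e. T_f = Σᵢ (2x/√(x²+1)) · arctan( sin θᵢ · √(x²+1) / (kᵢ + x·cos θᵢ) ). Then T_f is strictly increasing in x (with k₁, …, kₙ fixed) and, for each i, strictly decreasing in kᵢ (with x and the other kⱼ fixed). (This is Lemma 2.3: the total geodesic curvature of the circle of a face is uniquely determined by its own geodesic curvature x and the geodesic curvatures kᵢ of the neighboring circles, increases with x, and decreases with each kᵢ.) -/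
open Real Filter

lemma arctan_gt_aux (t : ℝ) (ht : 0 < t) : t / (1 + t^2) < Real.arctan t := by
  have hy : 0 < Real.arctan t := by
    have := Real.arctan_strictMono ht
    simpa using this
  have h2 : Real.sin (2 * Real.arctan t) < 2 * Real.arctan t := Real.sin_lt (by linarith)
  have hs : Real.sqrt (1 + t^2) > 0 := Real.sqrt_pos.mpr (by positivity)
  have hsq : Real.sqrt (1 + t^2) ^ 2 = 1 + t^2 := Real.sq_sqrt (by positivity)
  have h3 : Real.sin (2 * Real.arctan t) = 2 * (t / (1 + t^2)) := by
    rw [Real.sin_two_mul, Real.sin_arctan, Real.cos_arctan]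
    field_simp
    exact hsq.symm
  linarith

lemma T_anti_aux (a θ : ℝ) (ha : 0 < a) (hθ1 : 0 < θ) (hθ2 : θ ≤ Real.pi / 2) :
    StrictAntiOn (fun b => T a b θ) (Set.Ioi (0:ℝ)) := by
  intro b1 hb1 b2 hb2 h12
  simp only [Set.mem_Ioi] at hb1 hb2
  have hs : 0 < Real.sin θ := Real.sin_pos_of_pos_of_lt_pi hθ1 (by linarith [Real.pi_pos])
  have hc : 0 ≤ Real.cos θ := Real.cos_nonneg_of_mem_Icc ⟨by linarith [Real.pi_pos], hθ2⟩
  have hu : 0 < Real.sqrt (a^2+1) := Real.sqrt_pos.mpr (by positivity)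
  have hd1 : 0 < b1 + a * Real.cos θ := by positivity
  have hd2 : 0 < b2 + a * Real.cos θ := by positivity
  have harg : Real.sin θ * Real.sqrt (a^2+1) / (b2 + a * Real.cos θ)
      < Real.sin θ * Real.sqrt (a^2+1) / (b1 + a * Real.cos θ) :=
    div_lt_div_of_pos_left (by positivity) hd1 (by linarith)
  have := Real.arctan_strictMono harg
  simp only [T]
  have hC : 0 < 2 * a / Real.sqrt (a^2+1) := by positivity
  exact (mul_lt_mul_iff_right₀ hC).mpr this

lemma T_hasDeriv_aux (b θ : ℝ) (hb : 0 < b) (hθ1 : 0 < θ) (hθ2 : θ ≤ Real.pi / 2)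
    (x : ℝ) (hx : 0 < x) :
    HasDerivAt (fun x => T x b θ)
      (2 / Real.sqrt (x^2+1) ^ 3 *
        Real.arctan (Real.sin θ * Real.sqrt (x^2+1) / (b + x * Real.cos θ)) +
       2 * x * Real.sin θ * (b * x - Real.cos θ) /
        (Real.sqrt (x^2+1) ^ 2 *
          ((b + x * Real.cos θ)^2 + Real.sin θ ^ 2 * Real.sqrt (x^2+1) ^ 2))) x := by
  have hs : 0 < Real.sin θ := Real.sin_pos_of_pos_of_lt_pi hθ1 (by linarith [Real.pi_pos])
  have hc : 0 ≤ Real.cos θ := Real.cos_nonneg_of_mem_Icc ⟨by linarith [Real.pi_pos], hθ2⟩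
  set s := Real.sin θ
  set c := Real.cos θ
  set u := Real.sqrt (x^2+1) with hu_def
  have hu : 0 < u := Real.sqrt_pos.mpr (by positivity)
  have hu2 : u ^ 2 = x^2 + 1 := Real.sq_sqrt (by positivity)
  have hd : 0 < b + x * c := by positivity
  -- derivative pieces
  have hsq : HasDerivAt (fun y : ℝ => y^2 + 1) (2*x) x := by
    simpa using ((hasDerivAt_pow 2 x).add_const 1)
  have hU : HasDerivAt (fun y : ℝ => Real.sqrt (y^2+1)) (2*x / (2 * u)) x :=
    hsq.sqrt (by positivity)
  have hg : HasDerivAt (fun y : ℝ => 2*y / Real.sqrt (y^2+1))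
      ((2 * u - 2*x * (2*x / (2*u))) / u^2) x := by
    have h := ((hasDerivAt_id' x).const_mul 2).div hU (ne_of_gt hu)
    simp only [mul_one] at h
    exact h
  have hden : HasDerivAt (fun y : ℝ => b + y * c) c x := by
    simpa using ((hasDerivAt_id x).mul_const c).const_add b
  have hinner : HasDerivAt (fun y : ℝ => s * Real.sqrt (y^2+1) / (b + y * c))
      ((s * (2*x / (2*u)) * (b + x*c) - s * u * c) / (b + x*c)^2) x :=
    (hU.const_mul s).div hden (ne_of_gt hd)
  have hh : HasDerivAt (fun y : ℝ => Real.arctan (s * Real.sqrt (y^2+1) / (b + y * c)))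
      ((1 / (1 + (s * u / (b + x*c))^2)) *
        ((s * (2*x / (2*u)) * (b + x*c) - s * u * c) / (b + x*c)^2)) x := by
    have h := hinner.arctan
    convert h using 1
  have hf := hg.mul hh
  have : (fun y => T y b θ) = fun y =>
      (2*y / Real.sqrt (y^2+1)) * Real.arctan (s * Real.sqrt (y^2+1) / (b + y * c)) := by
    funext y
    simp only [T]
    rfl
  rw [this]
  have hD : 0 < (b + x*c)^2 + s^2 * u^2 := by positivity
  have hA : (2 * u - 2*x * (2*x / (2*u))) / u^2 = 2 / u^3 := by
    rw [div_eq_div_iff (by positivity) (by positivity)]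
    field_simp
    linear_combination hu2
  have hnum : s * (2*x / (2*u)) * (b + x*c) - s * u * c = s * (b*x - c) / u := by
    rw [eq_div_iff (ne_of_gt hu)]
    field_simp
    linear_combination (-c)*hu2
  have hone : 1 + (s * u / (b + x*c))^2 = ((b + x*c)^2 + s^2 * u^2) / (b + x*c)^2 := by
    field_simp
  have hB : (1 / (1 + (s * u / (b + x*c))^2)) *
      ((s * (2*x / (2*u)) * (b + x*c) - s * u * c) / (b + x*c)^2)
      = s * (b*x - c) / (u * ((b + x*c)^2 + s^2 * u^2)) := by
    rw [hnum, div_div, hone, one_div_div, div_mul_div_comm]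
    rw [div_eq_div_iff (by positivity) (by positivity)]
    ring
  have hfinal : 2 / u^3 * Real.arctan (s * u / (b + x * c)) +
      2 * x * s * (b*x - c) / (u^2 * ((b + x*c)^2 + s^2 * u^2))
      = (2 * u - 2*x * (2*x / (2*u))) / u^2 * Real.arctan (s * u / (b + x * c)) +
        (2*x / u) * ((1 / (1 + (s * u / (b + x*c))^2)) *
          ((s * (2*x / (2*u)) * (b + x*c) - s * u * c) / (b + x*c)^2)) := by
    rw [hA, hB]
    field_simp
  rw [hfinal]
  exact hf

lemma T_mono_aux (b θ : ℝ) (hb : 0 < b) (hθ1 : 0 < θ) (hθ2 : θ ≤ Real.pi / 2) :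
    StrictMonoOn (fun x => T x b θ) (Set.Ioi (0:ℝ)) := by
  apply strictMonoOn_of_deriv_pos (convex_Ioi 0)
  · intro x hx
    exact (T_hasDeriv_aux b θ hb hθ1 hθ2 x hx).differentiableAt.continuousAt.continuousWithinAt
  · intro x hx
    rw [interior_Ioi] at hx
    rw [(T_hasDeriv_aux b θ hb hθ1 hθ2 x hx).deriv]
    have hs : 0 < Real.sin θ := Real.sin_pos_of_pos_of_lt_pi hθ1 (by linarith [Real.pi_pos])
    have hc : 0 ≤ Real.cos θ := Real.cos_nonneg_of_mem_Icc ⟨by linarith [Real.pi_pos], hθ2⟩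
    set s := Real.sin θ
    set c := Real.cos θ
    set u := Real.sqrt (x^2+1) with hu_def
    have hx0 : (0:ℝ) < x := hx
    have hu : 0 < u := Real.sqrt_pos.mpr (by positivity)
    have hu2 : u ^ 2 = x^2 + 1 := Real.sq_sqrt (by positivity)
    have hd : 0 < b + x * c := by positivity
    have hD : 0 < (b + x*c)^2 + s^2 * u^2 := by positivity
    have ht : 0 < s * u / (b + x*c) := by positivity
    have harct := arctan_gt_aux _ ht
    have heq : (s * u / (b + x*c)) / (1 + (s * u / (b + x*c))^2)
        = s * u * (b + x*c) / ((b + x*c)^2 + s^2 * u^2) := by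
      have hone : 1 + (s * u / (b + x*c))^2 = ((b + x*c)^2 + s^2 * u^2) / (b + x*c)^2 := by
        field_simp
      rw [hone, div_div_eq_mul_div, div_eq_div_iff (by positivity) (by positivity)]
      field_simp
    have e : 2 / u^3 * (s * u * (b + x*c) / ((b + x*c)^2 + s^2 * u^2))
        + 2 * x * s * (b*x - c) / (u^2 * ((b + x*c)^2 + s^2 * u^2))
        = 2 * s * b * (1 + x^2) / (u^2 * ((b + x*c)^2 + s^2 * u^2)) := by
      field_simp
      ring
    have hpos : 0 < 2 * s * b * (1 + x^2) / (u^2 * ((b + x*c)^2 + s^2 * u^2)) := by positivity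
    have hmono : 2 / u^3 * (s * u * (b + x*c) / ((b + x*c)^2 + s^2 * u^2))
        < 2 / u^3 * Real.arctan (s * u / (b + x*c)) := by
      apply mul_lt_mul_of_pos_left _ (by positivity)
      rw [← heq]
      exact harct
    linarith


theorem stmt_10 (n : ℕ) (hn : 1 ≤ n) (θ : Fin n → ℝ)
    (hθ : ∀ i, 0 < θ i ∧ θ i ≤ Real.pi / 2) :
    (∀ k : Fin n → ℝ, (∀ i, 0 < k i) →
      StrictMonoOn (fun x => ∑ i, T x (k i) (θ i)) (Set.Ioi (0 : ℝ))) ∧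
    (∀ x : ℝ, 0 < x → ∀ k : Fin n → ℝ, (∀ i, 0 < k i) → ∀ i : Fin n,
      StrictAntiOn (fun y => ∑ j, T x (Function.update k i y j) (θ j))
        (Set.Ioi (0 : ℝ))) := by
  have hne : (Finset.univ : Finset (Fin n)).Nonempty := by
    refine ⟨⟨0, hn⟩, Finset.mem_univ _⟩
  constructor
  · intro k hk x hx y hy hxy
    apply Finset.sum_lt_sum_of_nonempty hne
    intro i _
    exact T_mono_aux (k i) (θ i) (hk i) (hθ i).1 (hθ i).2 hx hy hxy
  · intro x hx k hk i y1 hy1 y2 hy2 h12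
    apply Finset.sum_lt_sum
    · intro j _
      by_cases hji : j = i
      · subst hji
        simp only [Function.update_self]
        exact le_of_lt (T_anti_aux x (θ j) hx (hθ j).1 (hθ j).2 hy1 hy2 h12)
      · simp only [Function.update_of_ne hji]
        exact le_rfl
    · refine ⟨i, Finset.mem_univ _, ?_⟩
      simp only [Function.update_self]
      exact T_anti_aux x (θ i) hx (hθ i).1 (hθ i).2 hy1 hy2 h12
end

section
/- With the weighted-graph setup below, let k', k'' : F → ℝ be two maps with k' f > 0 and k'' f > 0 for all f, and let k := fun f ↦ max (k' f) (k'' f) be their pointwise maximum. Then for every f ∈ F, Ttot k f ≤ max (Ttot k' f) (Ttot k'' f). In particular, if T̂ : F → ℝ and both Ttot k' ≤ T̂ and Ttot k'' ≤ T̂ pointwise, then Ttot k ≤ T̂ pointwise; that is, the subpattern set 𝒦₁ = { k > 0 | Ttot k ≤ T̂ pointwise } is closed under pointwise maximum (the net property of the Perron family). -/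
/-!
Each term `T (k f) (k g) θ` is antitone in the neighbouring curvature `k g`. At a face `f`,
the pointwise maximum `k` agrees with one of `k'`, `k''` (say `k'`) at `f` and dominates it
everywhere, so passing from `k'` to `k` only raises the neighbours' curvatures and hence
`Ttot k f ≤ Ttot k' f`.
-/

open Real Filter Finset

/-- Total geodesic curvature of the boundary circle of the disk of the face `f`,
for the weighted graph with edge-to-faces map `ε`, weights `θ`, and geodesic
curvature vector `k`. -/
noncomputable def Ttot {F E : Type*} [Fintype E] [DecidableEq F]
    (ε : E → F × F) (θ : E → ℝ) (k : F → ℝ) (f : F) : ℝ :=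
  ∑ e : E,
    ((if (ε e).1 = f then T (k f) (k (ε e).2) (θ e) else 0) +
     (if (ε e).2 = f then T (k f) (k (ε e).1) (θ e) else 0))

lemma T_le_T_of_le {a b b' θ : ℝ} (ha : 0 ≤ a) (hb : 0 < b) (hθ : θ ∈ Set.Icc 0 (π / 2))
    (hbb : b ≤ b') : T a b' θ ≤ T a b θ := by
  have hsin : 0 ≤ sin θ := sin_nonneg_of_nonneg_of_le_pi hθ.1 (by linarith [hθ.2, pi_pos])
  have hcos : 0 ≤ cos θ := cos_nonneg_of_mem_Icc ⟨by linarith [hθ.1, pi_pos], hθ.2⟩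
  unfold T
  gcongr

lemma Ttot_le_Ttot_of_le_of_eq {F E : Type*} [Fintype E] [DecidableEq F]
    (ε : E → F × F) {θ : E → ℝ} (hθ : ∀ e, θ e ∈ Set.Icc 0 (π / 2))
    {c k : F → ℝ} (hc : ∀ g, 0 < c g) (hck : c ≤ k) {f : F} (hf : k f = c f) :
    Ttot ε θ k f ≤ Ttot ε θ c f := by
  have hT : ∀ e g, T (k f) (k g) (θ e) ≤ T (c f) (c g) (θ e) := fun e g => by
    rw [hf]
    exact T_le_T_of_le (hc f).le (hc g) (hθ e) (hck g)
  unfold Ttot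
  gcongr with e <;> split_ifs <;> first | exact hT e _ | exact le_rfl

lemma Ttot_max_le_max {F E : Type*} [Fintype E] [DecidableEq F]
    (ε : E → F × F) {θ : E → ℝ} (hθ : ∀ e, θ e ∈ Set.Icc 0 (π / 2))
    {k' k'' : F → ℝ} (hk' : ∀ f, 0 < k' f) (hk'' : ∀ f, 0 < k'' f) (f : F) :
    Ttot ε θ (k' ⊔ k'') f ≤ max (Ttot ε θ k' f) (Ttot ε θ k'' f) := by
  rcases le_total (k' f) (k'' f) with h | h
  · exact le_max_of_le_right <|
      Ttot_le_Ttot_of_le_of_eq ε hθ hk'' le_sup_right (max_eq_right h)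
  · exact le_max_of_le_left <|
      Ttot_le_Ttot_of_le_of_eq ε hθ hk' le_sup_left (max_eq_left h)

theorem stmt_13_general {F E : Type*} [Fintype E] [DecidableEq F]
    (ε : E → F × F) (θ : E → ℝ) (hθ : ∀ e, 0 < θ e ∧ θ e ≤ Real.pi / 2)
    (k' k'' : F → ℝ) (hk' : ∀ f, 0 < k' f) (hk'' : ∀ f, 0 < k'' f) :
    (∀ f, Ttot ε θ (fun g => max (k' g) (k'' g)) f ≤
      max (Ttot ε θ k' f) (Ttot ε θ k'' f)) ∧
    (∀ That : F → ℝ, (∀ f, Ttot ε θ k' f ≤ That f) →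
      (∀ f, Ttot ε θ k'' f ≤ That f) →
      ∀ f, Ttot ε θ (fun g => max (k' g) (k'' g)) f ≤ That f) := by
  have hmax := Ttot_max_le_max ε (fun e => ⟨(hθ e).1.le, (hθ e).2⟩) hk' hk''
  exact ⟨hmax, fun That h' h'' f => (hmax f).trans (max_le (h' f) (h'' f))⟩

theorem stmt_13 {F E : Type*} [Fintype F] [Fintype E] [Nonempty F] [DecidableEq F]
    (ε : E → F × F) (θ : E → ℝ) (hθ : ∀ e, 0 < θ e ∧ θ e ≤ Real.pi / 2)
    (hadj : ∀ f : F, ∃ e : E, (ε e).1 = f ∨ (ε e).2 = f)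
    (k' k'' : F → ℝ) (hk' : ∀ f, 0 < k' f) (hk'' : ∀ f, 0 < k'' f) :
    (∀ f, Ttot ε θ (fun g => max (k' g) (k'' g)) f ≤
      max (Ttot ε θ k' f) (Ttot ε θ k'' f)) ∧
    (∀ That : F → ℝ, (∀ f, Ttot ε θ k' f ≤ That f) →
      (∀ f, Ttot ε θ k'' f ≤ That f) →
      ∀ f, Ttot ε θ (fun g => max (k' g) (k'' g)) f ≤ That f) :=
  stmt_13_general ε θ hθ k' k'' hk' hk''
end

section
/- With the weighted-graph setup below, the map k ↦ Ttot k is injective on positive vectors: if k, k' : F → ℝ satisfy k f > 0 and k' f > 0 for all f, and Ttot k f = Ttot k' f for every f ∈ F, then k = k'. (This is the uniqueness/rigidity step, proved in the paper by comparing the total areas of the bigons, Σ_e Area(Ω_e) = 2·Σ_e θ e − Σ_f Ttot k f, and using that each bigon's area strictly decreases in the curvatures.) -/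
open Real Filter Finset

lemma aux_deriv (x : ℝ) :
    HasDerivAt (fun x : ℝ => Real.arctan x - x / (1 + x ^ 2))
      (2 * x ^ 2 / (1 + x ^ 2) ^ 2) x := by
  have hden : (1 : ℝ) + x ^ 2 ≠ 0 := by positivity
  have h1 : HasDerivAt Real.arctan (1 / (1 + x ^ 2)) x := Real.hasDerivAt_arctan x
  have h2 : HasDerivAt (fun x : ℝ => x / (1 + x ^ 2))
      ((1 * (1 + x ^ 2) - x * (2 * x)) / (1 + x ^ 2) ^ 2) x := by
    have hd : HasDerivAt (fun x : ℝ => 1 + x ^ 2) (2 * x) x := by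
      simpa using (hasDerivAt_pow 2 x).const_add 1
    exact (hasDerivAt_id x).div hd hden
  convert (show HasDerivAt (fun x : ℝ => Real.arctan x - x / (1 + x ^ 2)) _ x from h1.sub h2) using 1
  field_simp
  ring

lemma arctan_key {u : ℝ} (hu : 0 < u) : u / (1 + u ^ 2) < Real.arctan u := by
  have hmono : StrictMonoOn (fun x : ℝ => Real.arctan x - x / (1 + x ^ 2)) (Set.Ici 0) := by
    apply strictMonoOn_of_deriv_pos (convex_Ici 0)
    · apply Continuous.continuousOn
      apply Real.continuous_arctan.sub
      exact continuous_id.div (by continuity) (fun x => by positivity)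
    · intro x hx
      rw [interior_Ici] at hx
      rw [(aux_deriv x).deriv]
      have : (0:ℝ) < x := hx
      positivity
  have h0 := hmono (Set.self_mem_Ici) (Set.mem_Ici.mpr hu.le) hu
  simp only [Real.arctan_zero] at h0
  norm_num at h0
  linarith

lemma hasDerivAt_T_fst {b θ a : ℝ} (hb : 0 < b) (hθ1 : 0 < θ) (hθ2 : θ ≤ π / 2)
    (ha : 0 < a) :
    HasDerivAt (fun x => T x b θ)
      (2 / Real.sqrt (a ^ 2 + 1) ^ 3 *
          Real.arctan (Real.sin θ * Real.sqrt (a ^ 2 + 1) / (b + a * Real.cos θ)) +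
        2 * a * Real.sin θ * (a * b - Real.cos θ) /
          ((a ^ 2 + 1) * ((b + a * Real.cos θ) ^ 2 + Real.sin θ ^ 2 * (a ^ 2 + 1)))) a := by
  have hm : 0 < Real.sin θ := Real.sin_pos_of_pos_of_lt_pi hθ1 (by linarith [Real.pi_gt_three])
  have hc : 0 ≤ Real.cos θ := Real.cos_nonneg_of_mem_Icc ⟨by linarith [Real.pi_gt_three], hθ2⟩
  have hx1 : (0:ℝ) < a ^ 2 + 1 := by positivity
  have hs : 0 < Real.sqrt (a ^ 2 + 1) := Real.sqrt_pos.mpr hx1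
  have hs2 : Real.sqrt (a ^ 2 + 1) ^ 2 = a ^ 2 + 1 := Real.sq_sqrt hx1.le
  have hD : 0 < b + a * Real.cos θ := by positivity
  set s := Real.sqrt (a ^ 2 + 1) with hs_def
  set m := Real.sin θ
  set c := Real.cos θ
  set D := b + a * c with hD_def
  have hpoly : HasDerivAt (fun x : ℝ => x ^ 2 + 1) (2 * a) a := by
    simpa using (hasDerivAt_pow 2 a).add_const 1
  have hsqrt : HasDerivAt (fun x : ℝ => Real.sqrt (x ^ 2 + 1)) (2 * a / (2 * s)) a :=
    hpoly.sqrt (by positivity)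
  have hnum : HasDerivAt (fun x : ℝ => m * Real.sqrt (x ^ 2 + 1)) (m * (2 * a / (2 * s))) a :=
    hsqrt.const_mul m
  have hden : HasDerivAt (fun x : ℝ => b + x * c) (1 * c) a :=
    ((hasDerivAt_id a).mul_const c).const_add b
  have hu : HasDerivAt (fun x : ℝ => m * Real.sqrt (x ^ 2 + 1) / (b + x * c))
      ((m * (2 * a / (2 * s)) * D - m * s * (1 * c)) / D ^ 2) a :=
    hnum.div hden hD.ne'
  have harc : HasDerivAt (fun x : ℝ => Real.arctan (m * Real.sqrt (x ^ 2 + 1) / (b + x * c)))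
      (1 / (1 + (m * s / D) ^ 2) * ((m * (2 * a / (2 * s)) * D - m * s * (1 * c)) / D ^ 2)) a :=
    hu.arctan
  have hfac : HasDerivAt (fun x : ℝ => 2 * x / Real.sqrt (x ^ 2 + 1))
      ((2 * 1 * s - 2 * a * (2 * a / (2 * s))) / s ^ 2) a :=
    ((hasDerivAt_id a).const_mul 2).div hsqrt hs.ne'
  have htot := hfac.mul harc
  convert (show HasDerivAt (fun x => T x b θ) _ a from htot) using 1
  have hQ : 0 < D ^ 2 + m ^ 2 * (a ^ 2 + 1) := by positivity
  have h1u : 1 + (m * s / D) ^ 2 = (D ^ 2 + m ^ 2 * (a ^ 2 + 1)) / D ^ 2 := by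
    field_simp
    linear_combination m ^ 2 * hs2
  have e1 : (2 * 1 * s - 2 * a * (2 * a / (2 * s))) / s ^ 2 = 2 / s ^ 3 := by
    rw [div_eq_div_iff (by positivity) (by positivity)]
    field_simp
    linear_combination hs2
  have e2 : (m * (2 * a / (2 * s)) * D - m * s * (1 * c)) = m * (a * b - c) / s := by
    rw [eq_div_iff hs.ne']
    field_simp
    linear_combination a * hD_def - c * hs2
  rw [e1, e2, h1u, one_div_div]
  have e3 : D ^ 2 / (D ^ 2 + m ^ 2 * (a ^ 2 + 1)) * (m * (a * b - c) / s / D ^ 2)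
      = m * (a * b - c) / (s * (D ^ 2 + m ^ 2 * (a ^ 2 + 1))) := by
    field_simp
  rw [e3]
  have e4 : 2 * a / s * (m * (a * b - c) / (s * (D ^ 2 + m ^ 2 * (a ^ 2 + 1))))
      = 2 * a * m * (a * b - c) / (s ^ 2 * (D ^ 2 + m ^ 2 * (a ^ 2 + 1))) := by
    field_simp
  rw [e4, hs2]

lemma hasDerivAt_T_snd {b θ a : ℝ} (hb : 0 < b) (hθ1 : 0 < θ) (hθ2 : θ ≤ π / 2)
    (ha : 0 < a) :
    HasDerivAt (fun x => T b x θ)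
      (-(2 * b * Real.sin θ) /
        ((b + a * Real.cos θ) ^ 2 + Real.sin θ ^ 2 * (a ^ 2 + 1))) a := by
  have hm : 0 < Real.sin θ := Real.sin_pos_of_pos_of_lt_pi hθ1 (by linarith [Real.pi_gt_three])
  have hc : 0 ≤ Real.cos θ := Real.cos_nonneg_of_mem_Icc ⟨by linarith [Real.pi_gt_three], hθ2⟩
  have hx1 : (0:ℝ) < b ^ 2 + 1 := by positivity
  have hs : 0 < Real.sqrt (b ^ 2 + 1) := Real.sqrt_pos.mpr hx1
  have hs2 : Real.sqrt (b ^ 2 + 1) ^ 2 = b ^ 2 + 1 := Real.sq_sqrt hx1.le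
  set s := Real.sqrt (b ^ 2 + 1) with hs_def
  set m := Real.sin θ
  set c := Real.cos θ
  have hA : 0 < a + b * c := by positivity
  set A := a + b * c with hA_def
  have hden : HasDerivAt (fun x : ℝ => x + b * c) 1 a := (hasDerivAt_id a).add_const (b * c)
  have hu : HasDerivAt (fun x : ℝ => m * s / (x + b * c))
      ((0 * A - m * s * 1) / A ^ 2) a := (hasDerivAt_const a (m * s)).div hden hA.ne'
  have harc : HasDerivAt (fun x : ℝ => Real.arctan (m * s / (x + b * c)))
      (1 / (1 + (m * s / A) ^ 2) * ((0 * A - m * s * 1) / A ^ 2)) a := hu.arctan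
  have htot := harc.const_mul (2 * b / s)
  have hQQ : A ^ 2 + m ^ 2 * (b ^ 2 + 1) = (b + a * c) ^ 2 + m ^ 2 * (a ^ 2 + 1) := by
    have h1 := Real.sin_sq_add_cos_sq θ
    linear_combination (b ^ 2 - a ^ 2) * h1
  have hQ : 0 < A ^ 2 + m ^ 2 * (b ^ 2 + 1) := by positivity
  convert (show HasDerivAt (fun x => T b x θ) _ a from htot) using 1
  rw [← hQQ]
  have h1u : 1 + (m * s / A) ^ 2 = (A ^ 2 + m ^ 2 * (b ^ 2 + 1)) / A ^ 2 := by
    field_simp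
    linear_combination m ^ 2 * hs2
  rw [h1u, one_div_div]
  field_simp
  ring

lemma T_fst_strictMonoOn {b θ : ℝ} (hb : 0 < b) (hθ1 : 0 < θ) (hθ2 : θ ≤ π / 2) :
    StrictMonoOn (fun a => T a b θ) (Set.Ioi 0) := by
  have hm : 0 < Real.sin θ := Real.sin_pos_of_pos_of_lt_pi hθ1 (by linarith [Real.pi_gt_three])
  have hc : 0 ≤ Real.cos θ := Real.cos_nonneg_of_mem_Icc ⟨by linarith [Real.pi_gt_three], hθ2⟩
  apply strictMonoOn_of_deriv_pos (convex_Ioi 0)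
  · intro x hx
    exact ((hasDerivAt_T_fst hb hθ1 hθ2 hx).differentiableAt).continuousAt.continuousWithinAt
  · intro a ha
    rw [interior_Ioi] at ha
    have ha' : 0 < a := ha
    rw [(hasDerivAt_T_fst hb hθ1 hθ2 ha').deriv]
    set m := Real.sin θ
    set c := Real.cos θ
    have hx1 : (0:ℝ) < a ^ 2 + 1 := by positivity
    have hs : 0 < Real.sqrt (a ^ 2 + 1) := Real.sqrt_pos.mpr hx1
    have hs2 : Real.sqrt (a ^ 2 + 1) ^ 2 = a ^ 2 + 1 := Real.sq_sqrt hx1.le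
    set s := Real.sqrt (a ^ 2 + 1) with hs_def
    have hD : 0 < b + a * c := by positivity
    set D := b + a * c with hD_def
    have hQ : 0 < D ^ 2 + m ^ 2 * (a ^ 2 + 1) := by positivity
    set Q := D ^ 2 + m ^ 2 * (a ^ 2 + 1) with hQ_def
    have hu : 0 < m * s / D := by positivity
    have hkey := arctan_key hu
    have h2 : m * s / D / (1 + (m * s / D) ^ 2) = m * s * D / Q := by
      rw [hQ_def]
      field_simp
      linear_combination (-m ^ 2) * hs2
    have h3 : 2 / s ^ 3 * (m * s * D / Q) = 2 * m * D / ((a ^ 2 + 1) * Q) := by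
      field_simp
      linear_combination (-1 : ℝ) * hs2
    have h4 : 2 / s ^ 3 * (m * s / D / (1 + (m * s / D) ^ 2)) < 2 / s ^ 3 * Real.arctan (m * s / D) :=
      mul_lt_mul_of_pos_left hkey (by positivity)
    rw [h2, h3] at h4
    have h5 : 2 * m * D / ((a ^ 2 + 1) * Q) + 2 * a * m * (a * b - c) / ((a ^ 2 + 1) * Q)
        = 2 * m * b / Q := by
      rw [← add_div, div_eq_div_iff (by positivity) hQ.ne']
      ring
    have h6 : 0 < 2 * m * b / Q := by positivity
    linarith

lemma U_fst_strictMonoOn {b θ : ℝ} (hb : 0 < b) (hθ1 : 0 < θ) (hθ2 : θ ≤ π / 2) :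
    StrictMonoOn (fun a => T a b θ + T b a θ) (Set.Ioi 0) := by
  have hm : 0 < Real.sin θ := Real.sin_pos_of_pos_of_lt_pi hθ1 (by linarith [Real.pi_gt_three])
  have hc : 0 ≤ Real.cos θ := Real.cos_nonneg_of_mem_Icc ⟨by linarith [Real.pi_gt_three], hθ2⟩
  apply strictMonoOn_of_deriv_pos (convex_Ioi 0)
  · intro x hx
    exact (((hasDerivAt_T_fst hb hθ1 hθ2 hx).add
      (hasDerivAt_T_snd hb hθ1 hθ2 hx)).differentiableAt).continuousAt.continuousWithinAt
  · intro a ha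
    rw [interior_Ioi] at ha
    have ha' : 0 < a := ha
    rw [(show HasDerivAt (fun a => T a b θ + T b a θ) _ a from (hasDerivAt_T_fst hb hθ1 hθ2 ha').add (hasDerivAt_T_snd hb hθ1 hθ2 ha')).deriv]
    set m := Real.sin θ
    set c := Real.cos θ
    have hx1 : (0:ℝ) < a ^ 2 + 1 := by positivity
    have hs : 0 < Real.sqrt (a ^ 2 + 1) := Real.sqrt_pos.mpr hx1
    have hs2 : Real.sqrt (a ^ 2 + 1) ^ 2 = a ^ 2 + 1 := Real.sq_sqrt hx1.le
    set s := Real.sqrt (a ^ 2 + 1) with hs_def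
    have hD : 0 < b + a * c := by positivity
    set D := b + a * c with hD_def
    have hQ : 0 < D ^ 2 + m ^ 2 * (a ^ 2 + 1) := by positivity
    set Q := D ^ 2 + m ^ 2 * (a ^ 2 + 1) with hQ_def
    have hu : 0 < m * s / D := by positivity
    have hkey := arctan_key hu
    have h2 : m * s / D / (1 + (m * s / D) ^ 2) = m * s * D / Q := by
      rw [hQ_def]
      field_simp
      linear_combination (-m ^ 2) * hs2
    have h3 : 2 / s ^ 3 * (m * s * D / Q) = 2 * m * D / ((a ^ 2 + 1) * Q) := by
      field_simp
      linear_combination (-1 : ℝ) * hs2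
    have h4 : 2 / s ^ 3 * (m * s / D / (1 + (m * s / D) ^ 2)) < 2 / s ^ 3 * Real.arctan (m * s / D) :=
      mul_lt_mul_of_pos_left hkey (by positivity)
    rw [h2, h3] at h4
    have h5 : 2 * a * m * (a * b - c) / ((a ^ 2 + 1) * Q) + (-(2 * b * m) / Q)
        = -(2 * m * D / ((a ^ 2 + 1) * Q)) := by
      rw [div_add_div _ _ (by positivity : ((a ^ 2 + 1) * Q) ≠ 0) hQ.ne', ← neg_div,
        div_eq_div_iff (by positivity) (by positivity)]
      ring
    linarith

lemma T_snd_lt {a θ b b' : ℝ} (ha : 0 < a) (hθ1 : 0 < θ) (hθ2 : θ ≤ π / 2)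
    (hb : 0 < b) (hbb : b < b') : T a b' θ < T a b θ := by
  have hm : 0 < Real.sin θ := Real.sin_pos_of_pos_of_lt_pi hθ1 (by linarith [Real.pi_gt_three])
  have hc : 0 ≤ Real.cos θ := Real.cos_nonneg_of_mem_Icc ⟨by linarith [Real.pi_gt_three], hθ2⟩
  have hs : 0 < Real.sqrt (a ^ 2 + 1) := Real.sqrt_pos.mpr (by positivity)
  unfold T
  apply mul_lt_mul_of_pos_left _ (by positivity)
  apply Real.arctan_strictMono
  apply div_lt_div_of_pos_left (by positivity) (by positivity) (by linarith)

lemma T_snd_le {a θ b b' : ℝ} (ha : 0 < a) (hθ1 : 0 < θ) (hθ2 : θ ≤ π / 2)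
    (hb : 0 < b) (hbb : b ≤ b') : T a b' θ ≤ T a b θ := by
  rcases hbb.eq_or_lt with rfl | hlt
  · exact le_refl _
  · exact (T_snd_lt ha hθ1 hθ2 hb hlt).le

lemma cross_lt {θ a a' b b' : ℝ} (hθ1 : 0 < θ) (hθ2 : θ ≤ π / 2)
    (ha : 0 < a) (hb' : 0 < b') (haa : a < a') (hbb : b' ≤ b) :
    T a b θ < T a' b' θ := by
  have h1 : T a b θ ≤ T a b' θ := T_snd_le ha hθ1 hθ2 hb' hbb
  have h2 : T a b' θ < T a' b' θ :=
    T_fst_strictMonoOn hb' hθ1 hθ2 (Set.mem_Ioi.mpr ha)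
      (Set.mem_Ioi.mpr (ha.trans haa)) haa
  linarith

lemma both_lt {θ a a' b b' : ℝ} (hθ1 : 0 < θ) (hθ2 : θ ≤ π / 2)
    (ha : 0 < a) (hb : 0 < b) (haa : a < a') (hbb : b < b') :
    T a b θ + T b a θ < T a' b' θ + T b' a' θ := by
  have h1 : T a b θ + T b a θ < T a' b θ + T b a' θ :=
    U_fst_strictMonoOn hb hθ1 hθ2 (Set.mem_Ioi.mpr ha)
      (Set.mem_Ioi.mpr (ha.trans haa)) haa
  have h2 : T b a' θ + T a' b θ < T b' a' θ + T a' b' θ :=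
    U_fst_strictMonoOn (ha.trans haa) hθ1 hθ2 (Set.mem_Ioi.mpr hb)
      (Set.mem_Ioi.mpr (hb.trans hbb)) hbb
  linarith

lemma sum_Ttot {F E : Type*} [Fintype E] [DecidableEq F]
    (ε : E → F × F) (θ : E → ℝ) (k : F → ℝ) (S : Finset F) :
    ∑ f ∈ S, Ttot ε θ k f =
      ∑ e : E,
        ((if (ε e).1 ∈ S then T (k (ε e).1) (k (ε e).2) (θ e) else 0) +
         (if (ε e).2 ∈ S then T (k (ε e).2) (k (ε e).1) (θ e) else 0)) := by
  unfold Ttot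
  rw [Finset.sum_comm]
  refine Finset.sum_congr rfl fun e _ => ?_
  rw [Finset.sum_add_distrib,
    Finset.sum_ite_eq S (ε e).1 (fun f => T (k f) (k (ε e).2) (θ e)),
    Finset.sum_ite_eq S (ε e).2 (fun f => T (k f) (k (ε e).1) (θ e))]

lemma key_le {F E : Type*} [Fintype F] [Fintype E] [Nonempty F] [DecidableEq F]
    (ε : E → F × F) (θ : E → ℝ) (hθ : ∀ e, 0 < θ e ∧ θ e ≤ Real.pi / 2)
    (hadj : ∀ f : F, ∃ e : E, (ε e).1 = f ∨ (ε e).2 = f)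
    (k k' : F → ℝ) (hk : ∀ f, 0 < k f) (hk' : ∀ f, 0 < k' f)
    (h : ∀ f, Ttot ε θ k f = Ttot ε θ k' f) :
    ∀ f, k f ≤ k' f := by
  by_contra hcon
  push_neg at hcon
  obtain ⟨f0, hf0⟩ := hcon
  classical
  set S : Finset F := Finset.univ.filter (fun f => k' f < k f) with hS
  have hmemS : ∀ x, x ∈ S ↔ k' x < k x := by
    intro x; simp [hS]
  have hf0S : f0 ∈ S := (hmemS f0).mpr hf0
  -- per-edge comparison
  have edge_le : ∀ e : E,
      ((if (ε e).1 ∈ S then T (k' (ε e).1) (k' (ε e).2) (θ e) else 0) +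
       (if (ε e).2 ∈ S then T (k' (ε e).2) (k' (ε e).1) (θ e) else 0)) ≤
      ((if (ε e).1 ∈ S then T (k (ε e).1) (k (ε e).2) (θ e) else 0) +
       (if (ε e).2 ∈ S then T (k (ε e).2) (k (ε e).1) (θ e) else 0)) ∧
      (((ε e).1 ∈ S ∨ (ε e).2 ∈ S) →
      ((if (ε e).1 ∈ S then T (k' (ε e).1) (k' (ε e).2) (θ e) else 0) +
       (if (ε e).2 ∈ S then T (k' (ε e).2) (k' (ε e).1) (θ e) else 0)) <
      ((if (ε e).1 ∈ S then T (k (ε e).1) (k (ε e).2) (θ e) else 0) +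
       (if (ε e).2 ∈ S then T (k (ε e).2) (k (ε e).1) (θ e) else 0))) := by
    intro e
    obtain ⟨hθ1, hθ2⟩ := hθ e
    set p := (ε e).1
    set q := (ε e).2
    by_cases hp : p ∈ S <;> by_cases hq : q ∈ S <;>
      simp only [hp, hq, if_true, if_false, add_zero, zero_add, if_neg, if_pos]
    · -- both in S
      have hlt := both_lt hθ1 hθ2 (hk' p) (hk' q) ((hmemS p).mp hp) ((hmemS q).mp hq)
      exact ⟨hlt.le, fun _ => hlt⟩
    · -- p in S, q not
      have hq' : k q ≤ k' q := not_lt.mp (fun hcon' => hq ((hmemS q).mpr hcon'))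
      have hlt := cross_lt hθ1 hθ2 (hk' p) (hk q) ((hmemS p).mp hp) hq'
      exact ⟨hlt.le, fun _ => hlt⟩
    · -- q in S, p not
      have hp' : k p ≤ k' p := not_lt.mp (fun hcon' => hp ((hmemS p).mpr hcon'))
      have hlt := cross_lt hθ1 hθ2 (hk' q) (hk p) ((hmemS q).mp hq) hp'
      exact ⟨hlt.le, fun _ => hlt⟩
    · exact ⟨le_refl _, fun hor => absurd hor (by simp [hp, hq])⟩
  have hlt : ∑ f ∈ S, Ttot ε θ k' f < ∑ f ∈ S, Ttot ε θ k f := by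
    rw [sum_Ttot, sum_Ttot]
    apply Finset.sum_lt_sum
    · exact fun e _ => (edge_le e).1
    · obtain ⟨e0, he0⟩ := hadj f0
      refine ⟨e0, Finset.mem_univ _, (edge_le e0).2 ?_⟩
      rcases he0 with h1 | h1
      · exact Or.inl (h1 ▸ hf0S)
      · exact Or.inr (h1 ▸ hf0S)
  have heq : ∑ f ∈ S, Ttot ε θ k f = ∑ f ∈ S, Ttot ε θ k' f :=
    Finset.sum_congr rfl fun f _ => h f
  linarith

theorem stmt_14 {F E : Type*} [Fintype F] [Fintype E] [Nonempty F] [DecidableEq F]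
    (ε : E → F × F) (θ : E → ℝ) (hθ : ∀ e, 0 < θ e ∧ θ e ≤ Real.pi / 2)
    (hadj : ∀ f : F, ∃ e : E, (ε e).1 = f ∨ (ε e).2 = f)
    (k k' : F → ℝ) (hk : ∀ f, 0 < k f) (hk' : ∀ f, 0 < k' f)
    (h : ∀ f, Ttot ε θ k f = Ttot ε θ k' f) :
    k = k' := by
  funext f
  exact le_antisymm (key_le ε θ hθ hadj k k' hk hk' h f)
    (key_le ε θ hθ hadj k' k hk' hk (fun f => (h f).symm) f)
end

section
/- With the weighted-graph setup below, let k : F → ℝ satisfy k f > 0 for all f, let f₀ ∈ F, and let t be a real number with 0 < t < Σ_{e ∈ E({f₀})} 2·θ e (the sum over all edges adjacent to f₀). Then there exists a unique x > 0 such that Ttot (Function.update k f₀ x) f₀ = t. (This is the well-definedness of the single-circle adjustment step in Thurston's algorithm: keeping all other geodesic curvatures and all intersection angles fixed, the geodesic curvature of one circle can be uniquely adjusted to achieve any prescribed total geodesic curvature in the admissible range.) -/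
open Real Filter Finset Topology

lemma aux_arctan {x : ℝ} (hx : 0 < x) : x / (1 + x ^ 2) < Real.arctan x := by
  have key : StrictMonoOn (fun y : ℝ => Real.arctan y - y / (1 + y ^ 2)) (Set.Ici 0) := by
    apply strictMonoOn_of_deriv_pos (convex_Ici 0)
    · exact (Real.continuous_arctan.sub (continuous_id.div (by continuity)
        (fun y => by positivity))).continuousOn
    · intro y hy
      rw [interior_Ici, Set.mem_Ioi] at hy
      have h1 : (1 : ℝ) + y ^ 2 ≠ 0 := by positivity
      have hdiv : HasDerivAt (fun y : ℝ => y / (1 + y ^ 2))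
          ((1 * (1 + y ^ 2) - y * (2 * y ^ 1)) / (1 + y ^ 2) ^ 2) y :=
        (hasDerivAt_id y).div ((hasDerivAt_pow 2 y).const_add 1) h1
      have hd : HasDerivAt (fun y : ℝ => Real.arctan y - y / (1 + y ^ 2))
          (1 / (1 + y ^ 2) - (1 * (1 + y ^ 2) - y * (2 * y ^ 1)) / (1 + y ^ 2) ^ 2) y :=
        (Real.hasDerivAt_arctan y).sub hdiv
      rw [hd.deriv, div_sub_div _ _ h1 (by positivity)]
      apply div_pos
      · nlinarith [mul_pos hy hy, sq_nonneg y]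
      · positivity
  have := key (Set.mem_Ici.mpr le_rfl) (Set.mem_Ici.mpr hx.le) hx
  simp only [Real.arctan_zero, zero_div, sub_zero, zero_sub] at this
  linarith


lemma exists_hasDerivAt_T_left {b θ a : ℝ} (hb : 0 < b) (hs : 0 < Real.sin θ)
    (hc : 0 ≤ Real.cos θ) (ha : 0 < a) :
    ∃ d, 0 < d ∧ HasDerivAt (fun x => T x b θ) d a := by
  set s := Real.sin θ with hsdef
  set c := Real.cos θ with hcdef
  have hu2 : Real.sqrt (a ^ 2 + 1) ^ 2 = a ^ 2 + 1 := Real.sq_sqrt (by positivity)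
  set u := Real.sqrt (a ^ 2 + 1) with hu
  have hupos : 0 < u := Real.sqrt_pos.mpr (by positivity)
  have hw : 0 < b + a * c := by nlinarith [mul_nonneg ha.le hc]
  set w := b + a * c with hwdef
  set D := w ^ 2 + s ^ 2 * u ^ 2 with hD
  have hDpos : 0 < D := by positivity
  have hsq : HasDerivAt (fun x : ℝ => x ^ 2 + 1) (↑2 * a ^ 1) a :=
    (hasDerivAt_pow 2 a).add_const 1
  have hU : HasDerivAt (fun x : ℝ => Real.sqrt (x ^ 2 + 1)) (↑2 * a ^ 1 / (2 * u)) a :=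
    hsq.sqrt (by positivity)
  have hg : HasDerivAt (fun x : ℝ => 2 * x / Real.sqrt (x ^ 2 + 1))
      ((2 * 1 * u - 2 * a * (↑2 * a ^ 1 / (2 * u))) / u ^ 2) a :=
    ((hasDerivAt_id a).const_mul 2).div hU (ne_of_gt hupos)
  have hnum : HasDerivAt (fun x : ℝ => s * Real.sqrt (x ^ 2 + 1)) (s * (↑2 * a ^ 1 / (2 * u))) a :=
    hU.const_mul s
  have hden : HasDerivAt (fun x : ℝ => b + x * c) (1 * c) a :=
    ((hasDerivAt_id a).mul_const c).const_add b
  have harg : HasDerivAt (fun x : ℝ => s * Real.sqrt (x ^ 2 + 1) / (b + x * c))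
      ((s * (↑2 * a ^ 1 / (2 * u)) * w - s * u * (1 * c)) / w ^ 2) a :=
    hnum.div hden (ne_of_gt hw)
  have harctan : HasDerivAt (fun x : ℝ => Real.arctan (s * Real.sqrt (x ^ 2 + 1) / (b + x * c)))
      (1 / (1 + (s * u / w) ^ 2) * ((s * (↑2 * a ^ 1 / (2 * u)) * w - s * u * (1 * c)) / w ^ 2)) a :=
    harg.arctan
  set A := Real.arctan (s * u / w) with hA
  have hT : HasDerivAt (fun x => T x b θ)
      ((2 * 1 * u - 2 * a * (↑2 * a ^ 1 / (2 * u))) / u ^ 2 * A +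
        2 * a / u * (1 / (1 + (s * u / w) ^ 2) *
          ((s * (↑2 * a ^ 1 / (2 * u)) * w - s * u * (1 * c)) / w ^ 2))) a := by
    unfold T
    exact hg.mul harctan
  refine ⟨_, ?_, hT⟩
  have harc_lb : s * u * w < A * D := by
    have hx : 0 < s * u / w := by positivity
    have h1 := aux_arctan hx
    have h2 : s * u / w / (1 + (s * u / w) ^ 2) = s * u * w / D := by
      rw [hD]; field_simp
    rw [h2] at h1
    calc s * u * w = s * u * w / D * D := by field_simp
    _ < A * D := mul_lt_mul_of_pos_right h1 hDpos
  have hKey : 0 < A * D + a * u * (s * (a * b - c)) := by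
    have hident : s * u * w + a * u * (s * (a * b - c)) = s * u * b * (1 + a ^ 2) := by
      rw [hwdef]; ring
    nlinarith [harc_lb, mul_pos (mul_pos (mul_pos hs hupos) hb)
      (by positivity : (0:ℝ) < 1 + a ^ 2)]
  have e1 : (2 * 1 * u - 2 * a * (↑2 * a ^ 1 / (2 * u))) / u ^ 2 = 2 / u ^ 3 := by
    rw [pow_one]
    field_simp
    linear_combination hu2
  have e2 : s * (↑2 * a ^ 1 / (2 * u)) * w - s * u * (1 * c) = s * (a * b - c) / u := by
    rw [pow_one, hwdef]
    field_simp
    linear_combination (-c) * hu2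
  have e3 : 1 / (1 + (s * u / w) ^ 2) = w ^ 2 / D := by
    rw [hD]; field_simp
  rw [e1, e2, e3]
  have heq : 2 / u ^ 3 * A + 2 * a / u * (w ^ 2 / D * (s * (a * b - c) / u / w ^ 2))
      = 2 * (A * D + a * u * (s * (a * b - c))) / (u ^ 3 * D) := by
    field_simp
  rw [heq]
  positivity

lemma exists_hasDerivAt_T_diag {θ a : ℝ} (hs : 0 < Real.sin θ)
    (hc : 0 ≤ Real.cos θ) (ha : 0 < a) :
    ∃ d, 0 < d ∧ HasDerivAt (fun x => T x x θ) d a := by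
  set s := Real.sin θ with hsdef
  set c := Real.cos θ with hcdef
  have hu2 : Real.sqrt (a ^ 2 + 1) ^ 2 = a ^ 2 + 1 := Real.sq_sqrt (by positivity)
  set u := Real.sqrt (a ^ 2 + 1) with hu
  have hupos : 0 < u := Real.sqrt_pos.mpr (by positivity)
  have hw : 0 < a + a * c := by nlinarith [mul_nonneg ha.le hc]
  set w := a + a * c with hwdef
  set D := w ^ 2 + s ^ 2 * u ^ 2 with hD
  have hDpos : 0 < D := by positivity
  have hsq : HasDerivAt (fun x : ℝ => x ^ 2 + 1) (↑2 * a ^ 1) a :=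
    (hasDerivAt_pow 2 a).add_const 1
  have hU : HasDerivAt (fun x : ℝ => Real.sqrt (x ^ 2 + 1)) (↑2 * a ^ 1 / (2 * u)) a :=
    hsq.sqrt (by positivity)
  have hg : HasDerivAt (fun x : ℝ => 2 * x / Real.sqrt (x ^ 2 + 1))
      ((2 * 1 * u - 2 * a * (↑2 * a ^ 1 / (2 * u))) / u ^ 2) a :=
    ((hasDerivAt_id a).const_mul 2).div hU (ne_of_gt hupos)
  have hnum : HasDerivAt (fun x : ℝ => s * Real.sqrt (x ^ 2 + 1)) (s * (↑2 * a ^ 1 / (2 * u))) a :=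
    hU.const_mul s
  have hden : HasDerivAt (fun x : ℝ => x + x * c) (1 + 1 * c) a :=
    (hasDerivAt_id a).add ((hasDerivAt_id a).mul_const c)
  have harg : HasDerivAt (fun x : ℝ => s * Real.sqrt (x ^ 2 + 1) / (x + x * c))
      ((s * (↑2 * a ^ 1 / (2 * u)) * w - s * u * (1 + 1 * c)) / w ^ 2) a :=
    hnum.div hden (ne_of_gt hw)
  have harctan : HasDerivAt (fun x : ℝ => Real.arctan (s * Real.sqrt (x ^ 2 + 1) / (x + x * c)))
      (1 / (1 + (s * u / w) ^ 2) * ((s * (↑2 * a ^ 1 / (2 * u)) * w - s * u * (1 + 1 * c)) / w ^ 2)) a :=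
    harg.arctan
  set A := Real.arctan (s * u / w) with hA
  have hT : HasDerivAt (fun x => T x x θ)
      ((2 * 1 * u - 2 * a * (↑2 * a ^ 1 / (2 * u))) / u ^ 2 * A +
        2 * a / u * (1 / (1 + (s * u / w) ^ 2) *
          ((s * (↑2 * a ^ 1 / (2 * u)) * w - s * u * (1 + 1 * c)) / w ^ 2))) a := by
    unfold T
    exact hg.mul harctan
  refine ⟨_, ?_, hT⟩
  have harc_lb : s * u * w < A * D := by
    have hx : 0 < s * u / w := by positivity
    have h1 := aux_arctan hx
    have h2 : s * u / w / (1 + (s * u / w) ^ 2) = s * u * w / D := by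
      rw [hD]; field_simp
    rw [h2] at h1
    calc s * u * w = s * u * w / D * D := by field_simp
    _ < A * D := mul_lt_mul_of_pos_right h1 hDpos
  have hKey : 0 < A * D - a * u * (s * (1 + c)) := by
    have : a * u * (s * (1 + c)) = s * u * w := by rw [hwdef]; ring
    linarith
  have e1 : (2 * 1 * u - 2 * a * (↑2 * a ^ 1 / (2 * u))) / u ^ 2 = 2 / u ^ 3 := by
    rw [pow_one]
    field_simp
    linear_combination hu2
  have e2 : s * (↑2 * a ^ 1 / (2 * u)) * w - s * u * (1 + 1 * c) = -(s * (1 + c)) / u := by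
    rw [pow_one, hwdef]
    field_simp
    linear_combination (-1 : ℝ) * hu2
  have e3 : 1 / (1 + (s * u / w) ^ 2) = w ^ 2 / D := by
    rw [hD]; field_simp
  rw [e1, e2, e3]
  have heq : 2 / u ^ 3 * A + 2 * a / u * (w ^ 2 / D * (-(s * (1 + c)) / u / w ^ 2))
      = 2 * (A * D - a * u * (s * (1 + c))) / (u ^ 3 * D) := by
    field_simp
    ring
  rw [heq]
  apply div_pos (by linarith) (by positivity)

lemma strictMonoOn_T_left {b θ : ℝ} (hb : 0 < b) (hs : 0 < Real.sin θ)
    (hc : 0 ≤ Real.cos θ) : StrictMonoOn (fun x => T x b θ) (Set.Ioi 0) := by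
  apply strictMonoOn_of_deriv_pos (convex_Ioi 0)
  · intro x hx
    exact ((exists_hasDerivAt_T_left hb hs hc hx).choose_spec.2).continuousAt.continuousWithinAt
  · intro x hx
    rw [interior_Ioi] at hx
    obtain ⟨d, hd, hder⟩ := exists_hasDerivAt_T_left hb hs hc hx
    rw [hder.deriv]; exact hd

lemma strictMonoOn_T_diag {θ : ℝ} (hs : 0 < Real.sin θ)
    (hc : 0 ≤ Real.cos θ) : StrictMonoOn (fun x => T x x θ) (Set.Ioi 0) := by
  apply strictMonoOn_of_deriv_pos (convex_Ioi 0)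
  · intro x hx
    exact ((exists_hasDerivAt_T_diag hs hc hx).choose_spec.2).continuousAt.continuousWithinAt
  · intro x hx
    rw [interior_Ioi] at hx
    obtain ⟨d, hd, hder⟩ := exists_hasDerivAt_T_diag hs hc hx
    rw [hder.deriv]; exact hd

lemma T_nonneg {x b θ : ℝ} (hx : 0 ≤ x) (hs : 0 ≤ Real.sin θ)
    (hden : 0 ≤ b + x * Real.cos θ) : 0 ≤ T x b θ := by
  unfold T
  apply mul_nonneg (by positivity)
  have harg : 0 ≤ Real.sin θ * Real.sqrt (x ^ 2 + 1) / (b + x * Real.cos θ) :=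
    div_nonneg (mul_nonneg hs (Real.sqrt_nonneg _)) hden
  have := Real.arctan_strictMono.monotone harg
  rwa [Real.arctan_zero] at this

lemma T_le_pi_mul {x b θ : ℝ} (hx : 0 ≤ x) : T x b θ ≤ Real.pi * x := by
  unfold T
  have hu1 : (1:ℝ) ≤ Real.sqrt (x ^ 2 + 1) := by
    have h := Real.sqrt_le_sqrt (show (1:ℝ) ≤ x ^ 2 + 1 by nlinarith [sq_nonneg x])
    rwa [Real.sqrt_one] at h
  have hfr : 2 * x / Real.sqrt (x ^ 2 + 1) ≤ 2 * x := div_le_self (by linarith) hu1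
  have hfrn : 0 ≤ 2 * x / Real.sqrt (x ^ 2 + 1) := by positivity
  rcases le_or_gt 0 (Real.arctan (Real.sin θ * Real.sqrt (x ^ 2 + 1) / (b + x * Real.cos θ)))
    with h | h
  · calc 2 * x / Real.sqrt (x ^ 2 + 1) *
        Real.arctan (Real.sin θ * Real.sqrt (x ^ 2 + 1) / (b + x * Real.cos θ))
        ≤ 2 * x * (Real.pi / 2) :=
          mul_le_mul hfr (le_of_lt (Real.arctan_lt_pi_div_two _)) h (by linarith)
    _ = Real.pi * x := by ring
  · have : 2 * x / Real.sqrt (x ^ 2 + 1) *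
        Real.arctan (Real.sin θ * Real.sqrt (x ^ 2 + 1) / (b + x * Real.cos θ)) ≤ 0 :=
      mul_nonpos_of_nonneg_of_nonpos hfrn h.le
    have hpx : 0 ≤ Real.pi * x := mul_nonneg Real.pi_pos.le hx
    linarith

lemma tendsto_sq_add_one_atTop : Tendsto (fun a : ℝ => a ^ 2 + 1) atTop atTop :=
  tendsto_atTop_add_const_right _ 1 (tendsto_pow_atTop two_ne_zero)

lemma tendsto_sqrt_atTop : Tendsto Real.sqrt atTop atTop := by
  rw [tendsto_atTop]
  intro b
  filter_upwards [eventually_ge_atTop (b ^ 2 ⊔ 0)] with x hx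
  rcases le_or_gt b 0 with hb | hb
  · exact hb.trans (Real.sqrt_nonneg x)
  · have h2 : b ^ 2 ≤ x := le_trans (le_max_left _ _) hx
    calc b = Real.sqrt (b ^ 2) := (Real.sqrt_sq hb.le).symm
    _ ≤ Real.sqrt x := Real.sqrt_le_sqrt h2

lemma tendsto_ratio : Tendsto (fun a : ℝ => 2 * a / Real.sqrt (a ^ 2 + 1)) atTop (𝓝 2) := by
  have h0 : Tendsto (fun a : ℝ => (a ^ 2 + 1)⁻¹) atTop (𝓝 0) :=
    tendsto_sq_add_one_atTop.inv_tendsto_atTop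
  have hcont : Tendsto (fun y : ℝ => 2 * Real.sqrt (1 - y)) (𝓝 0) (𝓝 2) := by
    have hc : Continuous fun y : ℝ => 2 * Real.sqrt (1 - y) :=
      continuous_const.mul ((continuous_const.sub continuous_id).sqrt)
    have := hc.tendsto 0
    simpa using this
  apply (hcont.comp h0).congr'
  filter_upwards [eventually_gt_atTop 0] with a ha
  have ha2 : (0:ℝ) < a ^ 2 + 1 := by positivity
  show 2 * Real.sqrt (1 - (a ^ 2 + 1)⁻¹) = 2 * a / Real.sqrt (a ^ 2 + 1)
  rw [show (1:ℝ) - (a ^ 2 + 1)⁻¹ = a ^ 2 / (a ^ 2 + 1) by field_simp; ring]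
  rw [Real.sqrt_div (by positivity) _, Real.sqrt_sq ha.le]
  ring

lemma tendsto_T_left_atTop {b θ : ℝ} (hb : 0 < b) (hθ : 0 < θ) (hθ' : θ ≤ Real.pi / 2) :
    Tendsto (fun a => T a b θ) atTop (𝓝 (2 * θ)) := by
  have hpi := Real.pi_pos
  rcases eq_or_lt_of_le hθ' with heq | hlt
  · subst heq
    have hsqrt : Tendsto (fun a : ℝ => Real.sqrt (a ^ 2 + 1)) atTop atTop :=
      _root_.tendsto_sqrt_atTop.comp tendsto_sq_add_one_atTop
    have harg : Tendsto (fun a : ℝ =>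
        Real.sin (Real.pi / 2) * Real.sqrt (a ^ 2 + 1) / (b + a * Real.cos (Real.pi / 2)))
        atTop atTop := by
      simp only [Real.sin_pi_div_two, Real.cos_pi_div_two, mul_zero, add_zero, one_mul]
      exact hsqrt.atTop_div_const hb
    have harctan := (Real.tendsto_arctan_atTop.mono_right nhdsWithin_le_nhds).comp harg
    have h2 := tendsto_ratio.mul harctan
    show Tendsto (fun a : ℝ => (2 * a / Real.sqrt (a ^ 2 + 1)) *
      Real.arctan (Real.sin (Real.pi/2) * Real.sqrt (a ^ 2 + 1) / (b + a * Real.cos (Real.pi/2))))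
      atTop (𝓝 (2 * (Real.pi / 2)))
    simpa only [Function.comp_def, Real.sin_pi_div_two, Real.cos_pi_div_two, mul_zero,
      add_zero, one_mul] using h2
  · have hcpos : 0 < Real.cos θ := Real.cos_pos_of_mem_Ioo ⟨by linarith, hlt⟩
    have hg : Tendsto (fun y : ℝ => Real.sin θ * Real.sqrt (y ^ 2 + 1) / (b * y + Real.cos θ))
        (𝓝 0) (𝓝 (Real.sin θ / Real.cos θ)) := by
      have hc : ContinuousAt (fun y : ℝ => Real.sin θ * Real.sqrt (y ^ 2 + 1) / (b * y + Real.cos θ)) 0 := by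
        apply ContinuousAt.div
        · exact (continuous_const.mul ((continuous_pow 2 |>.add continuous_const).sqrt)).continuousAt
        · exact ((continuous_const.mul continuous_id).add continuous_const).continuousAt
        · simpa using hcpos.ne'
      have := hc.tendsto
      simpa using this
    have harg : Tendsto (fun a : ℝ => Real.sin θ * Real.sqrt (a ^ 2 + 1) / (b + a * Real.cos θ))
        atTop (𝓝 (Real.sin θ / Real.cos θ)) := by
      apply (hg.comp tendsto_inv_atTop_zero).congr'
      filter_upwards [eventually_gt_atTop 0] with a ha
      have ha' : a ≠ 0 := ha.ne'
      show Real.sin θ * Real.sqrt ((a⁻¹) ^ 2 + 1) / (b * a⁻¹ + Real.cos θ)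
        = Real.sin θ * Real.sqrt (a ^ 2 + 1) / (b + a * Real.cos θ)
      rw [show (a⁻¹) ^ 2 + (1:ℝ) = (a ^ 2 + 1) / a ^ 2 by field_simp; ring]
      rw [Real.sqrt_div (by positivity) _, Real.sqrt_sq ha.le]
      rw [div_eq_div_iff (by positivity) (by nlinarith [mul_nonneg ha.le hcpos.le])]
      field_simp
      try tauto
    have harctan := (Real.continuous_arctan.tendsto _).comp harg
    have harcval : Real.arctan (Real.sin θ / Real.cos θ) = θ := by
      rw [← Real.tan_eq_sin_div_cos, Real.arctan_tan (by linarith) hlt]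
    rw [harcval] at harctan
    exact tendsto_ratio.mul harctan

lemma tendsto_T_diag_atTop {θ : ℝ} (hθ : 0 < θ) (hθ' : θ ≤ Real.pi / 2) :
    Tendsto (fun a => T a a θ) atTop (𝓝 θ) := by
  have hpi := Real.pi_pos
  have hc : 0 ≤ Real.cos θ := Real.cos_nonneg_of_mem_Icc ⟨by linarith, hθ'⟩
  have hc1 : 0 < 1 + Real.cos θ := by linarith
  have hg : Tendsto (fun y : ℝ => Real.sin θ * Real.sqrt (y ^ 2 + 1) / (1 + Real.cos θ))
      (𝓝 0) (𝓝 (Real.sin θ / (1 + Real.cos θ))) := by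
    have hcont : Continuous fun y : ℝ => Real.sin θ * Real.sqrt (y ^ 2 + 1) / (1 + Real.cos θ) :=
      (continuous_const.mul ((continuous_pow 2 |>.add continuous_const).sqrt)).div_const _
    have := hcont.tendsto 0
    simpa using this
  have harg : Tendsto (fun a : ℝ => Real.sin θ * Real.sqrt (a ^ 2 + 1) / (a + a * Real.cos θ))
      atTop (𝓝 (Real.sin θ / (1 + Real.cos θ))) := by
    apply (hg.comp tendsto_inv_atTop_zero).congr'
    filter_upwards [eventually_gt_atTop 0] with a ha
    have ha' : a ≠ 0 := ha.ne'
    show Real.sin θ * Real.sqrt ((a⁻¹) ^ 2 + 1) / (1 + Real.cos θ)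
      = Real.sin θ * Real.sqrt (a ^ 2 + 1) / (a + a * Real.cos θ)
    rw [show (a⁻¹) ^ 2 + (1:ℝ) = (a ^ 2 + 1) / a ^ 2 by field_simp; ring]
    rw [Real.sqrt_div (by positivity) _, Real.sqrt_sq ha.le]
    rw [div_eq_div_iff (by positivity) (by nlinarith [mul_nonneg ha.le hc])]
    field_simp
    try tauto
  have harctan := (Real.continuous_arctan.tendsto _).comp harg
  have hcoshalf : 0 < Real.cos (θ / 2) :=
    Real.cos_pos_of_mem_Ioo ⟨by linarith, by linarith⟩
  have harcval : Real.arctan (Real.sin θ / (1 + Real.cos θ)) = θ / 2 := by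
    have hsin2 := Real.sin_two_mul (θ / 2)
    have hcos2 := Real.cos_two_mul (θ / 2)
    rw [show 2 * (θ / 2) = θ by ring] at hsin2 hcos2
    have hq : Real.sin θ / (1 + Real.cos θ) = Real.tan (θ / 2) := by
      rw [Real.tan_eq_sin_div_cos, hsin2, hcos2]
      rw [div_eq_div_iff (by nlinarith) hcoshalf.ne']
      ring
    rw [hq, Real.arctan_tan (by linarith) (by linarith)]
  rw [harcval] at harctan
  have := tendsto_ratio.mul harctan
  rw [show 2 * (θ / 2) = θ by ring] at this
  exact this

theorem stmt_15 {F E : Type*} [Fintype F] [Fintype E] [Nonempty F] [DecidableEq F]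
    (ε : E → F × F) (θ : E → ℝ) (hθ : ∀ e, 0 < θ e ∧ θ e ≤ Real.pi / 2)
    (hadj : ∀ f : F, ∃ e : E, (ε e).1 = f ∨ (ε e).2 = f)
    (k : F → ℝ) (hk : ∀ f, 0 < k f) (f₀ : F) (t : ℝ) (ht : 0 < t)
    (ht' : t < ∑ e ∈ Finset.univ.filter (fun e => (ε e).1 = f₀ ∨ (ε e).2 = f₀),
      2 * θ e) :
    ∃! x : ℝ, 0 < x ∧ Ttot ε θ (Function.update k f₀ x) f₀ = t := by
  have hpi := Real.pi_pos
  have hsin : ∀ e, 0 < Real.sin (θ e) :=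
    fun e => Real.sin_pos_of_pos_of_lt_pi (hθ e).1 (by linarith [(hθ e).2])
  have hcos : ∀ e, 0 ≤ Real.cos (θ e) :=
    fun e => Real.cos_nonneg_of_mem_Icc ⟨by linarith [(hθ e).1], (hθ e).2⟩
  set G : E → ℝ → ℝ := fun e x =>
    (if (ε e).1 = f₀ then (if (ε e).2 = f₀ then T x x (θ e) else T x (k ((ε e).2)) (θ e)) else 0) +
    (if (ε e).2 = f₀ then (if (ε e).1 = f₀ then T x x (θ e) else T x (k ((ε e).1)) (θ e)) else 0)
    with hGdef
  set Φ : ℝ → ℝ := fun x => ∑ e, G e x with hΦdef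
  have hG : ∀ x : ℝ, Ttot ε θ (Function.update k f₀ x) f₀ = Φ x := by
    intro x
    unfold Ttot
    apply Finset.sum_congr rfl
    intro e _
    by_cases h1 : (ε e).1 = f₀ <;> by_cases h2 : (ε e).2 = f₀
    · simp only [hGdef, h1, h2, if_true, eq_self_iff_true]
      rw [Function.update_self]
    · simp only [hGdef, h1, h2, if_true, if_false, eq_self_iff_true, add_zero]
      rw [Function.update_of_ne h2, Function.update_self]
    · simp only [hGdef, h1, h2, if_true, if_false, eq_self_iff_true, zero_add]
      rw [Function.update_of_ne h1, Function.update_self]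
    · simp [hGdef, h1, h2]
  -- strict monotonicity facts
  have hGlt : ∀ e, ((ε e).1 = f₀ ∨ (ε e).2 = f₀) → ∀ x ∈ Set.Ioi (0:ℝ), ∀ y ∈ Set.Ioi (0:ℝ),
      x < y → G e x < G e y := by
    intro e hadje x hx y hy hxy
    by_cases h1 : (ε e).1 = f₀ <;> by_cases h2 : (ε e).2 = f₀
    · simp only [hGdef, h1, h2, if_true]
      have := strictMonoOn_T_diag (hsin e) (hcos e) hx hy hxy
      simp only at this
      linarith
    · simp only [hGdef, h1, h2, if_true, if_false, add_zero]
      exact strictMonoOn_T_left (hk _) (hsin e) (hcos e) hx hy hxy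
    · simp only [hGdef, h1, h2, if_true, if_false, zero_add]
      exact strictMonoOn_T_left (hk _) (hsin e) (hcos e) hx hy hxy
    · exact absurd hadje (by tauto)
  have hGle : ∀ e, ∀ x ∈ Set.Ioi (0:ℝ), ∀ y ∈ Set.Ioi (0:ℝ), x < y → G e x ≤ G e y := by
    intro e x hx y hy hxy
    by_cases hadje : (ε e).1 = f₀ ∨ (ε e).2 = f₀
    · exact (hGlt e hadje x hx y hy hxy).le
    · push_neg at hadje
      simp [hGdef, hadje.1, hadje.2]
  have hΦmono : StrictMonoOn Φ (Set.Ioi 0) := by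
    intro x hx y hy hxy
    obtain ⟨e₀, he₀⟩ := hadj f₀
    exact Finset.sum_lt_sum (fun e _ => hGle e x hx y hy hxy)
      ⟨e₀, Finset.mem_univ e₀, hGlt e₀ he₀ x hx y hy hxy⟩
  -- continuity
  have hGcont : ∀ e, ContinuousOn (G e) (Set.Ioi 0) := by
    intro e
    intro x hx
    apply ContinuousWithinAt.add
    · by_cases h1 : (ε e).1 = f₀ <;> by_cases h2 : (ε e).2 = f₀ <;>
        simp only [hGdef, h1, h2, if_true, if_false]
      · exact ((exists_hasDerivAt_T_diag (hsin e) (hcos e) hx).choose_spec.2).continuousAt.continuousWithinAt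
      · exact ((exists_hasDerivAt_T_left (hk _) (hsin e) (hcos e) hx).choose_spec.2).continuousAt.continuousWithinAt
      · exact continuousWithinAt_const
      · exact continuousWithinAt_const
    · by_cases h1 : (ε e).1 = f₀ <;> by_cases h2 : (ε e).2 = f₀ <;>
        simp only [hGdef, h1, h2, if_true, if_false]
      · exact ((exists_hasDerivAt_T_diag (hsin e) (hcos e) hx).choose_spec.2).continuousAt.continuousWithinAt
      · exact continuousWithinAt_const
      · exact ((exists_hasDerivAt_T_left (hk _) (hsin e) (hcos e) hx).choose_spec.2).continuousAt.continuousWithinAt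
      · exact continuousWithinAt_const
  have hΦcont : ContinuousOn Φ (Set.Ioi 0) :=
    continuousOn_finset_sum _ (fun e _ => hGcont e)
  -- limit at top
  have hGtop : ∀ e, Tendsto (G e) atTop
      (𝓝 (if (ε e).1 = f₀ ∨ (ε e).2 = f₀ then 2 * θ e else 0)) := by
    intro e
    by_cases h1 : (ε e).1 = f₀ <;> by_cases h2 : (ε e).2 = f₀
    · simp only [hGdef, h1, h2, if_true, or_self]
      have := (tendsto_T_diag_atTop (hθ e).1 (hθ e).2).add (tendsto_T_diag_atTop (hθ e).1 (hθ e).2)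
      rw [show θ e + θ e = 2 * θ e by ring] at this
      exact this
    · simp only [hGdef, h1, h2, if_true, if_false, or_false, add_zero]
      exact tendsto_T_left_atTop (hk _) (hθ e).1 (hθ e).2
    · simp only [hGdef, h1, h2, if_true, if_false, false_or, zero_add]
      exact tendsto_T_left_atTop (hk _) (hθ e).1 (hθ e).2
    · simp only [hGdef, h1, h2, if_false, add_zero]
      simpa [h1, h2] using tendsto_const_nhds (α := ℝ) (f := atTop)
  have hΦtop : Tendsto Φ atTop
      (𝓝 (∑ e ∈ Finset.univ.filter (fun e => (ε e).1 = f₀ ∨ (ε e).2 = f₀), 2 * θ e)) := by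
    rw [Finset.sum_filter]
    exact tendsto_finset_sum _ (fun e _ => hGtop e)
  -- limit at 0⁺
  have hΦ0 : Tendsto Φ (𝓝[>] 0) (𝓝 0) := by
    apply squeeze_zero' (f := Φ) (g := fun x => (Fintype.card E : ℝ) * (2 * Real.pi * x))
    · filter_upwards [self_mem_nhdsWithin] with x hx
      apply Finset.sum_nonneg
      intro e _
      have hx' : (0:ℝ) < x := hx
      have hTnn : ∀ b : ℝ, 0 < b → 0 ≤ T x b (θ e) := fun b hb =>
        T_nonneg hx'.le (hsin e).le (by nlinarith [mul_nonneg hx'.le (hcos e)])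
      have hTnnx : 0 ≤ T x x (θ e) := hTnn x hx'
      by_cases h1 : (ε e).1 = f₀ <;> by_cases h2 : (ε e).2 = f₀ <;>
        simp [hGdef, h1, h2, hTnnx, hTnn _ (hk ((ε e).1)), hTnn _ (hk ((ε e).2))] <;> positivity
    · filter_upwards [self_mem_nhdsWithin] with x hx
      have hx' : (0:ℝ) < x := hx
      have hpx : 0 ≤ Real.pi * x := by positivity
      have hbound : ∀ e, G e x ≤ 2 * Real.pi * x := by
        intro e
        have hb1 : ∀ b : ℝ, T x b (θ e) ≤ Real.pi * x := fun b => T_le_pi_mul hx'.le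
        by_cases h1 : (ε e).1 = f₀ <;> by_cases h2 : (ε e).2 = f₀ <;>
          simp only [hGdef, h1, h2, if_true, if_false, add_zero, zero_add] <;>
          [skip; skip; skip; skip] <;>
          first
            | (have := hb1 x; have := hb1 (k ((ε e).1)); have := hb1 (k ((ε e).2)); linarith)
            | linarith
      calc Φ x ≤ ∑ _e : E, 2 * Real.pi * x := Finset.sum_le_sum (fun e _ => hbound e)
      _ = (Fintype.card E : ℝ) * (2 * Real.pi * x) := by
        rw [Finset.sum_const, Finset.card_univ, nsmul_eq_mul]
    · have hcont : Continuous fun x : ℝ => (Fintype.card E : ℝ) * (2 * Real.pi * x) := by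
        continuity
      have := hcont.tendsto 0
      simp only [mul_zero] at this
      exact tendsto_nhdsWithin_of_tendsto_nhds this
  -- pick endpoints
  obtain ⟨x₁, hΦx₁, hx₁⟩ := ((hΦ0.eventually (gt_mem_nhds ht)).and self_mem_nhdsWithin).exists
  obtain ⟨x₂, hΦx₂, hx₁₂⟩ := ((hΦtop.eventually (lt_mem_nhds ht')).and (eventually_gt_atTop x₁)).exists
  have hx₁pos : (0:ℝ) < x₁ := hx₁
  have hsub : Set.Icc x₁ x₂ ⊆ Set.Ioi (0:ℝ) := fun z hz => lt_of_lt_of_le hx₁pos hz.1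
  have hIVT := intermediate_value_Icc hx₁₂.le (hΦcont.mono hsub)
  obtain ⟨x, hxmem, hΦx⟩ := hIVT ⟨hΦx₁.le, hΦx₂.le⟩
  have hxpos : 0 < x := lt_of_lt_of_le hx₁pos hxmem.1
  refine ⟨x, ⟨hxpos, by rw [hG]; exact hΦx⟩, ?_⟩
  rintro y ⟨hy, hyeq⟩
  rw [hG] at hyeq
  exact hΦmono.injOn (Set.mem_Ioi.mpr hy) (Set.mem_Ioi.mpr hxpos) (by rw [hyeq, hΦx])
end
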